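/- arXiv:2401.11556 — 11 statements merged into one kernel-verified Lean document; each statement's English description precedes it below -/
import Mathlib

section
/- The mixed choice function C_v satisfies consistence: for any admissible assignments z, z' on E_v with z ≥ z' ≥ C_v(z), we have C_v(z') = C_v(z). -/
open Finset

/-- Admissible assignments: nonnegative and bounded by the capacities `b`. -/
def Adm {E : Type} (b : E → ℝ) (z : E → ℝ) : Prop := ∀ e, 0 ≤ z e ∧ z e ≤ b e

/-- Specification of the mixed choice function `C` on `E_v`, with capacities `b`,
quota `q`, and the weak order given by the tie-rank function `rank`
(smaller rank = more preferred tie). -/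
def IsMixedCF {E : Type} [Fintype E] [DecidableEq E]
    (b : E → ℝ) (q : ℝ) (rank : E → ℕ) (C : (E → ℝ) → (E → ℝ)) : Prop :=
  ∀ z : E → ℝ, Adm b z →
    ((∑ e, z e) ≤ q → C z = z) ∧
    (q < (∑ e, z e) → ∃ i : ℕ, ∃ r : ℝ, 0 ≤ r ∧
      (∑ e ∈ univ.filter (fun e => rank e < i), z e) < q ∧
      q ≤ (∑ e ∈ univ.filter (fun e => rank e ≤ i), z e) ∧
      (∑ e ∈ univ.filter (fun e => rank e < i), z e)
        + (∑ e ∈ univ.filter (fun e => rank e = i), min r (z e)) = q ∧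
      (∀ e, C z e = if rank e < i then z e else if rank e = i then min r (z e) else 0))

lemma filter_le_split {E : Type} [Fintype E] [DecidableEq E]
    (rank : E → ℕ) (i : ℕ) (f : E → ℝ) :
    ∑ e ∈ univ.filter (fun e => rank e ≤ i), f e
      = (∑ e ∈ univ.filter (fun e => rank e < i), f e)
        + ∑ e ∈ univ.filter (fun e => rank e = i), f e := by
  rw [← Finset.sum_filter_add_sum_filter_not (univ.filter (fun e => rank e ≤ i))
      (fun e => rank e < i), Finset.filter_filter, Finset.filter_filter]
  congr 1
  · congr 1; ext e; simp only [Finset.mem_filter, Finset.mem_univ, true_and]; omega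
  · congr 1; ext e; simp only [Finset.mem_filter, Finset.mem_univ, true_and]; omega

/-- consistence: if `z ≥ z' ≥ C(z)` for admissible `z, z'`,
then `C(z') = C(z)`. -/
theorem mixedCF_consistence {E : Type} [Fintype E] [DecidableEq E]
    (b : E → ℝ) (q : ℝ) (rank : E → ℕ) (C : (E → ℝ) → (E → ℝ))
    (hC : IsMixedCF b q rank C)
    (z z' : E → ℝ) (hz : Adm b z) (hz' : Adm b z')
    (h1 : ∀ e, z' e ≤ z e) (h2 : ∀ e, C z e ≤ z' e) :
    C z' = C z := by
  by_cases hzq : (∑ e, z e) ≤ q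
  · -- then C z = z and z' = z
    have hCzz : C z = z := (hC z hz).1 hzq
    have hzz : z' = z := funext fun e =>
      le_antisymm (h1 e) (by have := h2 e; rwa [hCzz] at this)
    rw [hzz]
  · obtain ⟨i, r, hr0, hlt, hq, hsum, hCz⟩ := (hC z hz).2 (lt_of_not_ge hzq)
    -- key pointwise facts
    have fact1 : ∀ e, rank e < i → z' e = z e := by
      intro e he
      have := h2 e
      rw [hCz e, if_pos he] at this
      exact le_antisymm (h1 e) this
    have fact2 : ∀ e, rank e = i → min r (z' e) = min r (z e) := by
      intro e he
      have hle2 : min r (z e) ≤ z' e := by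
        have := h2 e
        rwa [hCz e, if_neg (by omega), if_pos he] at this
      exact le_antisymm (min_le_min le_rfl (h1 e))
        (le_min (min_le_left _ _) hle2)
    have hA : ∑ e ∈ univ.filter (fun e => rank e < i), C z e
        = ∑ e ∈ univ.filter (fun e => rank e < i), z e :=
      Finset.sum_congr rfl fun e he => by
        have he' : rank e < i := by simpa using (Finset.mem_filter.1 he).2
        rw [hCz e, if_pos he']
    have hB : ∑ e ∈ univ.filter (fun e => rank e = i), C z e
        = ∑ e ∈ univ.filter (fun e => rank e = i), min r (z e) :=
      Finset.sum_congr rfl fun e he => by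
        have he' : rank e = i := by simpa using (Finset.mem_filter.1 he).2
        rw [hCz e, if_neg (by omega), if_pos he']
    have hD : ∑ e ∈ univ.filter (fun e => ¬ rank e ≤ i), C z e = 0 :=
      Finset.sum_eq_zero fun e he => by
        have he' : ¬ rank e ≤ i := by simpa using (Finset.mem_filter.1 he).2
        rw [hCz e, if_neg (by omega), if_neg (by omega)]
    -- ∑ C z over filter (rank ≤ i) equals q
    have hCle : ∑ e ∈ univ.filter (fun e => rank e ≤ i), C z e = q := by
      rw [filter_le_split, hA, hB]; exact hsum
    -- ∑ C z = q (entries with rank > i vanish)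
    have hCsum : ∑ e, C z e = q := by
      rw [← Finset.sum_filter_add_sum_filter_not univ (fun e => rank e ≤ i) (C z),
        hCle, hD, add_zero]
    by_cases hz'q : (∑ e, z' e) ≤ q
    · -- C z' = z' and z' = C z
      have hsumle : ∑ e, C z e ≤ ∑ e, z' e :=
        Finset.sum_le_sum fun e _ => h2 e
      have hsumeq : ∑ e, C z e = ∑ e, z' e :=
        le_antisymm hsumle (by rw [hCsum]; exact hz'q)
      have hpw : ∀ e ∈ (univ : Finset E), C z e = z' e :=
        (Finset.sum_eq_sum_iff_of_le (fun e _ => h2 e)).1 hsumeq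
      rw [(hC z' hz').1 hz'q]
      exact funext fun e => (hpw e (mem_univ e)).symm
    · obtain ⟨i', r', hr0', hlt', hq', hsum', hCz'⟩ :=
        (hC z' hz').2 (lt_of_not_ge hz'q)
      -- prefix sums of z'
      have p1 : ∑ e ∈ univ.filter (fun e => rank e < i), z' e
          = ∑ e ∈ univ.filter (fun e => rank e < i), z e :=
        Finset.sum_congr rfl fun e he => fact1 e (by
          simpa using (Finset.mem_filter.1 he).2)
      have p1lt : ∑ e ∈ univ.filter (fun e => rank e < i), z' e < q := by
        rw [p1]; exact hlt
      have p2 : q ≤ ∑ e ∈ univ.filter (fun e => rank e ≤ i), z' e := by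
        calc q = ∑ e ∈ univ.filter (fun e => rank e ≤ i), C z e := hCle.symm
        _ ≤ _ := Finset.sum_le_sum fun e _ => h2 e
      -- i' = i
      have hii : i' = i := by
        by_contra hne
        rcases lt_or_gt_of_ne hne with hlt2 | hlt2
        · have hsub : univ.filter (fun e => rank e ≤ i')
              ⊆ univ.filter (fun e => rank e < i) := by
            intro e he
            simp only [Finset.mem_filter, Finset.mem_univ, true_and] at he ⊢
            omega
          have := Finset.sum_le_sum_of_subset_of_nonneg hsub
            (fun e _ _ => (hz' e).1)
          linarith [hq']
        · have hsub : univ.filter (fun e => rank e ≤ i)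
              ⊆ univ.filter (fun e => rank e < i') := by
            intro e he
            simp only [Finset.mem_filter, Finset.mem_univ, true_and] at he ⊢
            omega
          have := Finset.sum_le_sum_of_subset_of_nonneg hsub
            (fun e _ _ => (hz' e).1)
          linarith [hlt']
      rw [hii] at hlt' hq' hsum' hCz'
      -- sums of mins agree on the critical tie
      have hmins : ∑ e ∈ univ.filter (fun e => rank e = i), min r' (z' e)
          = ∑ e ∈ univ.filter (fun e => rank e = i), min r (z' e) := by
        have e1 : ∑ e ∈ univ.filter (fun e => rank e = i), min r (z' e)
            = ∑ e ∈ univ.filter (fun e => rank e = i), min r (z e) :=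
          Finset.sum_congr rfl fun e he => fact2 e (by
            simpa using (Finset.mem_filter.1 he).2)
        rw [p1] at hsum'
        linarith
      -- pointwise equality of mins
      have hminpw : ∀ e ∈ univ.filter (fun e => rank e = i),
          min r' (z' e) = min r (z' e) := by
        rcases le_total r' r with hrr | hrr
        · exact (Finset.sum_eq_sum_iff_of_le
            (fun e _ => min_le_min hrr le_rfl)).1 hmins
        · intro e he
          exact ((Finset.sum_eq_sum_iff_of_le
            (fun e _ => min_le_min hrr le_rfl)).1 hmins.symm e he).symm
      funext e
      rw [hCz e, hCz' e]
      by_cases hc1 : rank e < i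
      · rw [if_pos hc1, if_pos hc1]; exact fact1 e hc1
      · rw [if_neg hc1, if_neg hc1]
        by_cases hc2 : rank e = i
        · rw [if_pos hc2, if_pos hc2]
          rw [hminpw e (by simp [hc2])]
          exact fact2 e hc2
        · rw [if_neg hc2, if_neg hc2]
end

section
/- The mixed choice function C_v satisfies persistence (substitutability): for any admissible assignments z, z' on E_v with z ≥ z', we have C_v(z) ∧ z' ≤ C_v(z'), where ∧ denotes the pointwise minimum. -/
open Finset

/-- persistence / substitutability: if `z ≥ z'`,
then `C(z) ∧ z' ≤ C(z')` pointwise. -/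
theorem mixedCF_persistence {E : Type} [Fintype E] [DecidableEq E]
    (b : E → ℝ) (q : ℝ) (rank : E → ℕ) (C : (E → ℝ) → (E → ℝ))
    (hC : IsMixedCF b q rank C)
    (z z' : E → ℝ) (hz : Adm b z) (hz' : Adm b z')
    (h : ∀ e, z' e ≤ z e) :
    ∀ e, min (C z e) (z' e) ≤ C z' e := by
  intro e
  obtain ⟨h1', h2'⟩ := hC z' hz'
  by_cases hq' : (∑ e, z' e) ≤ q
  · rw [h1' hq']; exact min_le_right _ _
  push_neg at hq'
  have hqz : q < ∑ e, z e :=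
    lt_of_lt_of_le hq' (Finset.sum_le_sum fun e _ => h e)
  obtain ⟨i', r', hr'0, hi'1, hi'2, hi'3, hCz'⟩ := h2' hq'
  obtain ⟨i, r, hr0, hi1, hi2, hi3, hCz⟩ := (hC z hz).2 hqz
  have hii' : i ≤ i' := by
    by_contra hlt
    push_neg at hlt
    have hsub : (univ.filter (fun e => rank e ≤ i')) ⊆ (univ.filter fun e => rank e < i) := by
      intro x hx
      simp only [mem_filter, mem_univ, true_and] at *
      omega
    have hle : (∑ e ∈ univ.filter (fun e => rank e ≤ i'), z' e)
        ≤ ∑ e ∈ univ.filter (fun e => rank e < i), z e := by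
      calc (∑ e ∈ univ.filter (fun e => rank e ≤ i'), z' e)
          ≤ ∑ e ∈ univ.filter (fun e => rank e ≤ i'), z e :=
            Finset.sum_le_sum fun x _ => h x
        _ ≤ _ := Finset.sum_le_sum_of_subset_of_nonneg hsub (fun x _ _ => (hz x).1)
    linarith
  rw [hCz e, hCz' e]
  by_cases he1 : rank e < i'
  · simp only [if_pos he1]
    exact min_le_right _ _
  by_cases he2 : rank e = i'
  · simp only [if_neg he1, if_pos he2]
    by_cases hei : rank e = i
    · -- i = i' : the critical ties coincide
      have hii : i' = i := he2 ▸ hei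
      simp only [if_neg (by omega : ¬ rank e < i), if_pos hei]
      have key : min r (z' e) ≤ min r' (z' e) := by
        by_cases hrr : r ≤ r'
        · exact le_min (le_trans (min_le_left _ _) hrr) (min_le_right _ _)
        · push_neg at hrr
          -- r' < r : sum argument
          subst hii
          have hle : ∀ x ∈ univ.filter (fun e => rank e = i'),
              min r' (z' x) ≤ min r (z x) :=
            fun x _ => min_le_min hrr.le (h x)
          have hs1 : (∑ x ∈ univ.filter (fun e => rank e = i'), min r (z x))
              ≤ ∑ x ∈ univ.filter (fun e => rank e = i'), min r' (z' x) := by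
            have hs0 : (∑ x ∈ univ.filter (fun e => rank e < i'), z' x)
                ≤ ∑ x ∈ univ.filter (fun e => rank e < i'), z x :=
              Finset.sum_le_sum fun x _ => h x
            linarith
          have heq : (∑ x ∈ univ.filter (fun e => rank e = i'), min r' (z' x))
              = ∑ x ∈ univ.filter (fun e => rank e = i'), min r (z x) :=
            le_antisymm (Finset.sum_le_sum hle) hs1
          have hptw := (Finset.sum_eq_sum_iff_of_le hle).1 heq e
              (by simp [hei])
          have h2 : min r (z' e) ≤ min r (z e) := min_le_min le_rfl (h e)
          rw [← hptw] at h2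
          exact h2
      calc min (min r (z e)) (z' e) ≤ min r (z' e) :=
            le_min (le_trans (min_le_left _ _) (min_le_left _ _)) (min_le_right _ _)
        _ ≤ _ := key
    · -- rank e = i' > i : C z e = 0
      have : ¬ rank e < i := by omega
      simp only [if_neg this, if_neg hei]
      exact le_trans (min_le_left _ _) (le_min hr'0 (hz' e).1)
  · -- rank e > i' ≥ i : both zero
    have h1 : ¬ rank e < i := by omega
    have h2 : ¬ rank e = i := by omega
    simp only [if_neg he1, if_neg he2, if_neg h1, if_neg h2]
    exact min_le_left _ _
end

section
/- For stationary assignments z, z' on E_v (i.e., C_v(z) = z and C_v(z') = z'), the revealed preference relation z ⪰ z', defined by C_v(z ∨ z') = z, holds if and only if z(e) ≥ z'(e) for every edge e in the tail T_v(z). -/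
open Finset

private lemma sum_split_ite {E : Type} [Fintype E] [DecidableEq E] (rank : E → ℕ) (i : ℕ)
    (f g : E → ℝ) :
    (∑ e, (if rank e < i then f e else if rank e = i then g e else 0))
      = (∑ e ∈ univ.filter (fun e => rank e < i), f e)
        + (∑ e ∈ univ.filter (fun e => rank e = i), g e) := by
  rw [Finset.sum_filter, Finset.sum_filter, ← Finset.sum_add_distrib]
  refine Finset.sum_congr rfl fun e _ => ?_
  rcases lt_trichotomy (rank e) i with h | h | h
  · simp [h, Nat.ne_of_lt h]
  · simp [h]
  · simp [Nat.lt_asymm h, (Nat.ne_of_lt h).symm]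

private lemma sum_filter_le_split {E : Type} [Fintype E] [DecidableEq E]
    (rank : E → ℕ) (i : ℕ) (u : E → ℝ) :
    (∑ e ∈ univ.filter (fun e => rank e ≤ i), u e)
      = (∑ e ∈ univ.filter (fun e => rank e < i), u e)
        + (∑ e ∈ univ.filter (fun e => rank e = i), u e) := by
  rw [← sum_split_ite rank i u u, Finset.sum_filter]
  refine Finset.sum_congr rfl fun e _ => ?_
  rcases lt_trichotomy (rank e) i with h | h | h
  · simp [h, h.le]
  · simp [h]
  · simp [Nat.lt_asymm h, (Nat.ne_of_lt h).symm, not_le_of_gt h]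

private lemma crit_unique {E : Type} [Fintype E] [DecidableEq E] (rank : E → ℕ) (q : ℝ)
    (u : E → ℝ) (hu : ∀ e, 0 ≤ u e) {i j : ℕ}
    (hi1 : (∑ e ∈ univ.filter (fun e => rank e < i), u e) < q)
    (hi2 : q ≤ (∑ e ∈ univ.filter (fun e => rank e ≤ i), u e))
    (hj1 : (∑ e ∈ univ.filter (fun e => rank e < j), u e) < q)
    (hj2 : q ≤ (∑ e ∈ univ.filter (fun e => rank e ≤ j), u e)) : i = j := by
  have key : ∀ a b : ℕ, a < b →
      q ≤ (∑ e ∈ univ.filter (fun e => rank e ≤ a), u e) →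
      (∑ e ∈ univ.filter (fun e => rank e < b), u e) < q → False := by
    intro a b hab h2 h1
    have hsub : univ.filter (fun e => rank e ≤ a) ⊆ univ.filter (fun e => rank e < b) := by
      intro e he
      simp only [mem_filter, mem_univ, true_and] at he ⊢
      exact lt_of_le_of_lt he hab
    have := Finset.sum_le_sum_of_subset_of_nonneg hsub (fun e _ _ => hu e)
    linarith
  rcases lt_trichotomy i j with h | h | h
  · exact absurd (key i j h hi2 hj1) (fun f => f)
  · exact h
  · exact absurd (key j i h hj2 hi1) (fun f => f)

private lemma eq_of_le_of_sum_le {E : Type} [Fintype E] (f g : E → ℝ)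
    (h : ∀ e, f e ≤ g e) (hs : (∑ e, g e) ≤ ∑ e, f e) : ∀ e, f e = g e := by
  have heq : (∑ e, f e) = ∑ e, g e :=
    le_antisymm (Finset.sum_le_sum fun e _ => h e) hs
  have := (Finset.sum_eq_sum_iff_of_le (fun e _ => h e)).1 heq
  exact fun e => this e (mem_univ e)

/-- for stationary `z, z'`, the revealed preference `C(z ∨ z') = z`
holds iff `z ≥ z'` on the tail `T_v(z)`.  In the deficit case the tail is all
of `E_v`; in the quota-filling case, given the critical tie `i` (defined by the
cumulative-sum conditions) and the cutting height `r` (the maximum of `z` over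
tie `i`), the tail consists of the edges of ties better than `i` together with
the edges of tie `i` with `z e < r`. -/
theorem mixedCF_revealed_pref_iff_tail {E : Type} [Fintype E] [DecidableEq E]
    (b : E → ℝ) (q : ℝ) (rank : E → ℕ) (C : (E → ℝ) → (E → ℝ))
    (hC : IsMixedCF b q rank C)
    (z z' : E → ℝ) (hz : Adm b z) (hz' : Adm b z')
    (hst : C z = z) (hst' : C z' = z') :
    ((∑ e, z e) < q →
      ((C (fun e => max (z e) (z' e)) = z) ↔ ∀ e, z' e ≤ z e)) ∧
    ((∑ e, z e) = q → ∀ (i : ℕ) (r : ℝ),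
      (∑ e ∈ univ.filter (fun e => rank e < i), z e) < q →
      q ≤ (∑ e ∈ univ.filter (fun e => rank e ≤ i), z e) →
      (∀ e, rank e = i → z e ≤ r) →
      (∃ e, rank e = i ∧ z e = r) →
      ((C (fun e => max (z e) (z' e)) = z) ↔
        ∀ e, (rank e < i ∨ (rank e = i ∧ z e < r)) → z' e ≤ z e)) := by
  set w : E → ℝ := fun e => max (z e) (z' e) with hwdef
  have hwAdm : Adm b w := fun e =>
    ⟨le_trans (hz e).1 (le_max_left _ _), max_le (hz e).2 (hz' e).2⟩
  have hzle : ∀ e, z e ≤ w e := fun e => le_max_left _ _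
  have hz'le : ∀ e, z' e ≤ w e := fun e => le_max_right _ _
  have hz0 : ∀ e, 0 ≤ z e := fun e => (hz e).1
  have hw0 : ∀ e, 0 ≤ w e := fun e => (hwAdm e).1
  have hsum_zw : (∑ e, z e) ≤ ∑ e, w e := Finset.sum_le_sum (fun e _ => hzle e)
  constructor
  · -- deficit case
    intro hdef
    constructor
    · intro hCw e
      by_cases hle : (∑ e, w e) ≤ q
      · have hfix := (hC w hwAdm).1 hle
        have hwz : w = z := by rw [← hCw, hfix]
        have := (congrFun hwz e).symm.le
        exact le_trans (hz'le e) (congrFun hwz e).le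
      · push_neg at hle
        obtain ⟨i, r, hr0, h1, h2, h3, h4⟩ := (hC w hwAdm).2 hle
        have hsumC : (∑ e, C w e) = q := by
          calc (∑ e, C w e)
              = ∑ e, (if rank e < i then w e else if rank e = i then min r (w e) else 0) :=
                Finset.sum_congr rfl (fun e _ => h4 e)
            _ = _ + _ := sum_split_ite rank i w (fun e => min r (w e))
            _ = q := h3
        rw [hCw] at hsumC
        exact absurd hsumC (ne_of_lt hdef)
    · intro hle
      have : w = z := funext fun e => max_eq_left (hle e)
      rw [this, hst]
  · -- quota-filling case
    intro hq i r hi1 hi2 hrmax ⟨e1, he1i, he1r⟩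
    -- z vanishes above tie i
    have hz_gt : ∀ e, ¬ rank e ≤ i → z e = 0 := by
      have hsplit := Finset.sum_filter_add_sum_filter_not univ (fun e => rank e ≤ i) z
      have hge0 : (0:ℝ) ≤ ∑ e ∈ univ.filter (fun e => ¬ rank e ≤ i), z e :=
        Finset.sum_nonneg fun e _ => hz0 e
      have hle0 : (∑ e ∈ univ.filter (fun e => ¬ rank e ≤ i), z e) ≤ 0 := by
        rw [hq] at hsplit; linarith
      have := (Finset.sum_eq_zero_iff_of_nonneg (fun e _ => hz0 e)).1
        (le_antisymm hle0 hge0)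
      intro e he
      exact this e (by simp only [mem_filter, mem_univ, true_and]; exact he)
    have hsum_le_i : (∑ e ∈ univ.filter (fun e => rank e ≤ i), z e) = q := by
      have hsplit := Finset.sum_filter_add_sum_filter_not univ (fun e => rank e ≤ i) z
      have : (∑ e ∈ univ.filter (fun e => ¬ rank e ≤ i), z e) = 0 :=
        Finset.sum_eq_zero fun e he => hz_gt e (by simpa using (mem_filter.1 he).2)
      rw [hq] at hsplit; linarith
    have hsum_eq_i : (∑ e ∈ univ.filter (fun e => rank e < i), z e)
        + (∑ e ∈ univ.filter (fun e => rank e = i), z e) = q := by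
      rw [← sum_filter_le_split rank i z]; exact hsum_le_i
    constructor
    · -- forward: C w = z → tail inequality
      intro hCw e htail
      by_cases hle : (∑ e, w e) ≤ q
      · have hfix := (hC w hwAdm).1 hle
        have hwz : w = z := by rw [← hCw, hfix]
        exact le_trans (hz'le e) (congrFun hwz e).le
      · push_neg at hle
        obtain ⟨i', r', hr'0, h1', h2', h3', h4'⟩ := (hC w hwAdm).2 hle
        have hform : ∀ e, z e =
            if rank e < i' then w e else if rank e = i' then min r' (w e) else 0 := by
          intro e; rw [← hCw]; exact h4' e
        -- z vanishes above i'
        have hz_gt' : ∀ e, i' < rank e → z e = 0 := by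
          intro e he
          rw [hform e]
          simp [Nat.lt_asymm he, (Nat.ne_of_lt he).symm]
        have hzi'1 : (∑ e ∈ univ.filter (fun e => rank e < i'), z e) < q :=
          lt_of_le_of_lt (Finset.sum_le_sum fun e _ => hzle e) h1'
        have hzi'2 : q ≤ (∑ e ∈ univ.filter (fun e => rank e ≤ i'), z e) := by
          have hsplit := Finset.sum_filter_add_sum_filter_not univ (fun e => rank e ≤ i') z
          have h0 : (∑ e ∈ univ.filter (fun e => ¬ rank e ≤ i'), z e) = 0 :=
            Finset.sum_eq_zero fun e he => by
              have := (mem_filter.1 he).2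
              exact hz_gt' e (Nat.lt_of_not_le (by simpa using this))
          rw [hq] at hsplit; linarith
        have hii' : i = i' := crit_unique rank q z hz0 hi1 hi2 hzi'1 hzi'2
        subst hii'
        rcases htail with hlt | ⟨heq, hlt⟩
        · have := hform e
          rw [if_pos hlt] at this
          exact le_trans (hz'le e) this.symm.le
        · by_contra hcon
          push_neg at hcon
          have hwe : w e = z' e := max_eq_right hcon.le
          have hwgt : z e < w e := by rw [hwe]; exact hcon
          have hze := hform e
          rw [if_neg (by omega), if_pos heq] at hze
          -- min r' (w e) = z e, w e > z e ⇒ r' = z e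
          have hr'eq : r' = z e := by
            rcases min_cases r' (w e) with ⟨hm, _⟩ | ⟨hm, _⟩
            · rw [hm] at hze; exact hze.symm
            · rw [hm] at hze; exact absurd hze (ne_of_lt hwgt)
          have h1le := hform e1
          rw [if_neg (by omega), if_pos he1i] at h1le
          have : z e1 ≤ r' := h1le.le.trans (min_le_left _ _)
          rw [he1r, hr'eq] at this
          exact absurd this (not_le_of_gt hlt)
    · -- backward: tail inequality → C w = z
      intro htl
      have hw_lt : ∀ e, rank e < i → w e = z e := fun e he =>
        max_eq_left (htl e (Or.inl he))
      by_cases hle : (∑ e, w e) ≤ q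
      · have hfix := (hC w hwAdm).1 hle
        have : ∀ e, z e = w e := eq_of_le_of_sum_le z w hzle (by rw [← hq] at hle; exact hle)
        rw [hfix]; exact funext fun e => (this e).symm
      · push_neg at hle
        obtain ⟨i', r', hr'0, h1', h2', h3', h4'⟩ := (hC w hwAdm).2 hle
        have hsum_w_lt : (∑ e ∈ univ.filter (fun e => rank e < i), w e)
            = ∑ e ∈ univ.filter (fun e => rank e < i), z e :=
          Finset.sum_congr rfl fun e he => hw_lt e (by simpa using (mem_filter.1 he).2)
        have hwi1 : (∑ e ∈ univ.filter (fun e => rank e < i), w e) < q := by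
          rw [hsum_w_lt]; exact hi1
        have hwi2 : q ≤ (∑ e ∈ univ.filter (fun e => rank e ≤ i), w e) :=
          le_trans hi2 (Finset.sum_le_sum fun e _ => hzle e)
        have hii' : i = i' := crit_unique rank q w hw0 hwi1 hwi2 h1' h2'
        subst hii'
        -- sum over tie i of min r' (w e) equals sum of z
        have hmin_sum : (∑ e ∈ univ.filter (fun e => rank e = i), min r' (w e))
            = ∑ e ∈ univ.filter (fun e => rank e = i), z e := by
          rw [hsum_w_lt] at h3'
          linarith [hsum_eq_i]
        -- r ≤ r'
        have hrr' : r ≤ r' := by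
          by_contra hcon
          push_neg at hcon
          have hlt : (∑ e ∈ univ.filter (fun e => rank e = i), min r' (w e))
              < ∑ e ∈ univ.filter (fun e => rank e = i), z e := by
            apply Finset.sum_lt_sum
            · intro e he
              have hei : rank e = i := by simpa using (mem_filter.1 he).2
              rcases lt_or_eq_of_le (hrmax e hei) with h | h
              · have : w e = z e := max_eq_left (htl e (Or.inr ⟨hei, h⟩))
                rw [this]; exact min_le_right _ _
              · exact le_trans (min_le_left _ _) (by rw [h]; exact hcon.le)
            · refine ⟨e1, by simp [he1i], ?_⟩
              calc min r' (w e1) ≤ r' := min_le_left _ _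
                _ < r := hcon
                _ = z e1 := he1r.symm
          rw [hmin_sum] at hlt
          exact lt_irrefl _ hlt
        have hmin_ge : ∀ e, rank e = i → z e ≤ min r' (w e) := fun e he =>
          le_min (le_trans (hrmax e he) hrr') (hzle e)
        have hmin_eq : ∀ e ∈ univ.filter (fun e => rank e = i), z e = min r' (w e) := by
          have heq : (∑ e ∈ univ.filter (fun e => rank e = i), z e)
              = ∑ e ∈ univ.filter (fun e => rank e = i), min r' (w e) := hmin_sum.symm
          exact (Finset.sum_eq_sum_iff_of_le
            (fun e he => hmin_ge e (by simpa using (mem_filter.1 he).2))).1 heq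
        funext e
        rw [h4' e]
        rcases lt_trichotomy (rank e) i with h | h | h
        · rw [if_pos h]; exact hw_lt e h
        · rw [if_neg (by omega), if_pos h]
          exact (hmin_eq e (by simp [h])).symm
        · rw [if_neg (by omega), if_neg (by omega)]
          exact (hz_gt e (by omega)).symm
end

section
/- If z, z' are stationary quota-filling assignments on E_v with z ≻ z' (i.e., C_v(z ∨ z') = z and z ≠ z'), then the critical tie of z is no worse than that of z': π^c(z) ≥ π^c(z'); and when π^c(z) = π^c(z'), the head of z' is contained in the head of z, and the cutting heights satisfy r^{z'} > r^z. -/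
open Finset

/-- for stationary quota-filling `z ≻ z'` (i.e. `C(z ∨ z') = z`,
`z ≠ z'`), with critical ties `i, i'` and cutting heights `r, r'` of `z, z'`
respectively, one has `i ≤ i'` (the critical tie of `z` is no worse), and if
`i = i'` then the head of `z'` is contained in the head of `z` and `r < r'`. -/
theorem mixedCF_pref_critical_ties {E : Type} [Fintype E] [DecidableEq E]
    (b : E → ℝ) (q : ℝ) (rank : E → ℕ) (C : (E → ℝ) → (E → ℝ))
    (hC : IsMixedCF b q rank C)
    (z z' : E → ℝ) (hz : Adm b z) (hz' : Adm b z')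
    (hst : C z = z) (hst' : C z' = z')
    (hfill : (∑ e, z e) = q) (hfill' : (∑ e, z' e) = q)
    (hpref : C (fun e => max (z e) (z' e)) = z) (hne : z ≠ z')
    (i i' : ℕ) (r r' : ℝ)
    (hi1 : (∑ e ∈ univ.filter (fun e => rank e < i), z e) < q)
    (hi2 : q ≤ (∑ e ∈ univ.filter (fun e => rank e ≤ i), z e))
    (hr1 : ∀ e, rank e = i → z e ≤ r) (hr2 : ∃ e, rank e = i ∧ z e = r)
    (hi1' : (∑ e ∈ univ.filter (fun e => rank e < i'), z' e) < q)
    (hi2' : q ≤ (∑ e ∈ univ.filter (fun e => rank e ≤ i'), z' e))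
    (hr1' : ∀ e, rank e = i' → z' e ≤ r') (hr2' : ∃ e, rank e = i' ∧ z' e = r') :
    i ≤ i' ∧
    (i = i' → (∀ e, rank e = i → z' e = r' → z e = r) ∧ r < r') := by
  classical
  set w : E → ℝ := fun e => max (z e) (z' e) with hwdef
  have hwadm : Adm b w := fun e =>
    ⟨le_trans (hz e).1 (le_max_left _ _), max_le (hz e).2 (hz' e).2⟩
  have hle_ne : ¬ (∀ e, z' e ≤ z e) := by
    intro h
    apply hne
    have hsum : ∑ e, (z e - z' e) = 0 := by
      rw [Finset.sum_sub_distrib, hfill, hfill']; ring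
    funext e
    have := (Finset.sum_eq_zero_iff_of_nonneg
      (fun e _ => sub_nonneg.2 (h e))).1 hsum e (mem_univ e)
    linarith
  obtain ⟨hle, hgt⟩ := hC w hwadm
  have hq : q < ∑ e, w e := by
    by_contra hle2
    push_neg at hle2
    have hCw := hle hle2
    apply hle_ne
    intro e
    have hzw : z e = w e := by rw [← hpref, hCw]
    rw [hzw]; exact le_max_right _ _
  obtain ⟨j, s, hs0, hj1, hj2, hjq, hCw⟩ := hgt hq
  have hze : ∀ e, z e =
      if rank e < j then w e else if rank e = j then min s (w e) else 0 := by
    intro e; rw [← hpref]; exact hCw e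
  -- z vanishes above j
  have hz0j : ∀ e, j < rank e → z e = 0 := by
    intro e he
    have h := hze e
    rw [if_neg (by omega), if_neg (by omega)] at h
    exact h
  -- z' vanishes above i'
  have hz'0 : ∀ e, i' < rank e → z' e = 0 := by
    have hsplit := Finset.sum_filter_add_sum_filter_not univ
      (fun e => rank e ≤ i') z'
    rw [hfill'] at hsplit
    have hzero : ∑ e ∈ univ.filter (fun e => ¬ rank e ≤ i'), z' e = 0 :=
      le_antisymm (by linarith) (Finset.sum_nonneg fun e _ => (hz' e).1)
    intro e he
    exact (Finset.sum_eq_zero_iff_of_nonneg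
      (fun e _ => (hz' e).1)).1 hzero e (by simp [Finset.mem_filter]; omega)
  -- i ≤ j
  have hij : i ≤ j := by
    by_contra hlt
    push_neg at hlt
    have hsub : (univ.filter fun e => rank e ≤ j) ⊆
        univ.filter fun e => rank e < i := by
      intro e he
      simp only [Finset.mem_filter, Finset.mem_univ, true_and] at he ⊢
      omega
    have heq : (∑ e ∈ univ.filter (fun e => rank e ≤ j), z e) = q := by
      rw [← hfill]
      exact Finset.sum_subset (Finset.filter_subset _ _)
        (fun e _ hnot => hz0j e (by simp at hnot; omega))
    have := Finset.sum_le_sum_of_subset_of_nonneg hsub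
      (fun e _ _ => (hz e).1)
    rw [heq] at this
    linarith
  -- j ≤ i
  have hji : j ≤ i := by
    by_contra hlt
    push_neg at hlt
    have hsub : (univ.filter fun e => rank e ≤ i) ⊆
        univ.filter fun e => rank e < j := by
      intro e he
      simp only [Finset.mem_filter, Finset.mem_univ, true_and] at he ⊢
      omega
    have h1 : (∑ e ∈ univ.filter (fun e => rank e < j), z e)
        ≤ ∑ e ∈ univ.filter (fun e => rank e < j), w e :=
      Finset.sum_le_sum (fun e _ => le_max_left _ _)
    have h2 := Finset.sum_le_sum_of_subset_of_nonneg hsub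
      (fun e _ _ => (hz e).1)
    linarith
  have hji' : j = i := le_antisymm hji hij
  subst hji'
  -- below the critical tie, z dominates z'
  have hdom : ∀ e, rank e < j → z' e ≤ z e := by
    intro e he
    have h := hze e
    rw [if_pos he] at h
    rw [h]; exact le_max_right _ _
  -- i ≤ i'
  have hii' : j ≤ i' := by
    by_contra hlt
    push_neg at hlt
    have hsub : (univ.filter fun e => rank e ≤ i') ⊆
        univ.filter fun e => rank e < j := by
      intro e he
      simp only [Finset.mem_filter, Finset.mem_univ, true_and] at he ⊢
      omega
    have heq : (∑ e ∈ univ.filter (fun e => rank e ≤ i'), z' e) = q := by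
      rw [← hfill']
      exact Finset.sum_subset (Finset.filter_subset _ _)
        (fun e _ hnot => hz'0 e (by simp at hnot; omega))
    have h2 := Finset.sum_le_sum_of_subset_of_nonneg hsub
      (fun e _ _ => (hz' e).1)
    have h3 : (∑ e ∈ univ.filter (fun e => rank e < j), z' e)
        ≤ ∑ e ∈ univ.filter (fun e => rank e < j), z e :=
      Finset.sum_le_sum (fun e he => hdom e (by simpa using (Finset.mem_filter.1 he).2))
    linarith
  refine ⟨hii', fun hii => ?_⟩
  subst hii
  -- on the critical tie, z e = min s (w e)
  have hmin : ∀ e, rank e = j → z e = min s (w e) := by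
    intro e he
    have h := hze e
    rw [if_neg (by omega), if_pos he] at h
    exact h
  -- r ≤ s
  obtain ⟨e0, he0, hze0⟩ := hr2
  have hrs : r ≤ s := by
    have := hmin e0 he0
    rw [hze0] at this
    calc r = min s (w e0) := this
      _ ≤ s := min_le_left _ _
  -- if z' e > z e on the tie, then z e = r
  have hkey : ∀ e, rank e = j → z e < z' e → z e = r := by
    intro e he hlt
    have h := hmin e he
    have hw : w e = z' e := max_eq_right (le_of_lt hlt)
    rw [hw] at h
    rcases min_cases s (z' e) with ⟨h1, h2⟩ | ⟨h1, h2⟩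
    · have hzs : z e = s := by rw [h, h1]
      have := hr1 e he
      linarith
    · rw [h, h1] at hlt; exact absurd hlt (lt_irrefl _)
  -- r < r'
  have hrr' : r < r' := by
    by_contra hle3
    push_neg at hle3
    apply hle_ne
    intro e
    rcases lt_trichotomy (rank e) j with hc | hc | hc
    · exact hdom e hc
    · by_contra hgt2
      push_neg at hgt2
      have hzr := hkey e hc hgt2
      have := hr1' e hc
      linarith
    · rw [hz'0 e hc]; exact (hz e).1
  refine ⟨fun e he he' => ?_, hrr'⟩
  have hlt : z e < z' e := by
    have := hr1 e he
    rw [he']; linarith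
  exact hkey e he hlt
end

section
/- For a stationary assignment z on E_v, an edge e with z(e) < b(e) is interesting for v under z (there exists z' with z'(e) > z(e), z' = z elsewhere, and C_v(z')(e) > z(e)) if and only if e belongs to the tail T_v(z). -/
open Finset

/-- An edge `e` is interesting for `v` under a stationary assignment `z`:
some `z''` increasing `z` at `e` only has `C(z'') e > z e`. -/
def InterestingEdge {E : Type} [Fintype E] [DecidableEq E]
    (b : E → ℝ) (C : (E → ℝ) → (E → ℝ)) (z : E → ℝ) (e : E) : Prop :=
  ∃ z'' : E → ℝ, Adm b z'' ∧ z e < z'' e ∧ (∀ e', e' ≠ e → z'' e' = z e') ∧ z e < C z'' e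

lemma sum_shift_aux {E : Type} [DecidableEq E] (s : Finset E) (z z'' : E → ℝ) (e : E)
    (h : ∀ e', e' ≠ e → z'' e' = z e') :
    ∑ x ∈ s, z'' x = (∑ x ∈ s, z x) + (if e ∈ s then z'' e - z e else 0) := by
  have h1 : ∑ x ∈ s, (z'' x - z x) = if e ∈ s then z'' e - z e else 0 := by
    by_cases hes : e ∈ s
    · rw [if_pos hes]
      apply Finset.sum_eq_single_of_mem e hes
      intro b _ hb; rw [h b hb]; ring
    · rw [if_neg hes]
      apply Finset.sum_eq_zero
      intro x hx
      have hne : x ≠ e := fun h' => hes (h' ▸ hx)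
      rw [h x hne]; ring
  have h2 : ∑ x ∈ s, (z'' x - z x) = ∑ x ∈ s, z'' x - ∑ x ∈ s, z x :=
    Finset.sum_sub_distrib _ _
  linarith

lemma crit_unique_aux {E : Type} [Fintype E] (rank : E → ℕ) (w : E → ℝ)
    (hw : ∀ x, 0 ≤ w x) (q : ℝ) (i j : ℕ)
    (h2 : q ≤ ∑ x ∈ univ.filter (fun x => rank x ≤ i), w x)
    (h3 : (∑ x ∈ univ.filter (fun x => rank x < j), w x) < q) : j ≤ i := by
  by_contra hij
  push_neg at hij
  have hsub : univ.filter (fun x => rank x ≤ i) ⊆ univ.filter (fun x => rank x < j) := by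
    intro x hx; simp only [mem_filter, mem_univ, true_and] at *; omega
  have := Finset.sum_le_sum_of_subset_of_nonneg hsub (fun x _ _ => hw x)
  linarith

lemma crit_unique_s6 {E : Type} [Fintype E] (rank : E → ℕ) (w : E → ℝ)
    (hw : ∀ x, 0 ≤ w x) (q : ℝ) (i j : ℕ)
    (h1 : (∑ x ∈ univ.filter (fun x => rank x < i), w x) < q)
    (h2 : q ≤ ∑ x ∈ univ.filter (fun x => rank x ≤ i), w x)
    (h3 : (∑ x ∈ univ.filter (fun x => rank x < j), w x) < q)
    (h4 : q ≤ ∑ x ∈ univ.filter (fun x => rank x ≤ j), w x) : i = j :=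
  le_antisymm (crit_unique_aux rank w hw q j i h4 h1) (crit_unique_aux rank w hw q i j h2 h3)

lemma sum_le_split {E : Type} [Fintype E] (rank : E → ℕ) (w : E → ℝ) (i : ℕ) :
    ∑ x ∈ univ.filter (fun x => rank x ≤ i), w x
      = (∑ x ∈ univ.filter (fun x => rank x < i), w x)
        + ∑ x ∈ univ.filter (fun x => rank x = i), w x := by
  classical
  rw [← Finset.sum_filter_add_sum_filter_not (univ.filter (fun x => rank x ≤ i))
    (fun x => rank x < i) w]
  congr 1
  · apply Finset.sum_congr _ (fun _ _ => rfl)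
    ext x; simp only [mem_filter, mem_univ, true_and]; omega
  · apply Finset.sum_congr _ (fun _ _ => rfl)
    ext x; simp only [mem_filter, mem_univ, true_and, not_lt]; omega

lemma perturb {E : Type} [Fintype E] [DecidableEq E] (b z : E → ℝ) (hz : Adm b z)
    (e : E) (δ : ℝ) (hδ0 : 0 < δ) (hδb : δ ≤ b e - z e) :
    ∃ z'' : E → ℝ, Adm b z'' ∧ z'' e = z e + δ ∧ (∀ e', e' ≠ e → z'' e' = z e') ∧
      (∀ s : Finset E, ∑ x ∈ s, z'' x = (∑ x ∈ s, z x) + (if e ∈ s then δ else 0)) := by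
  refine ⟨Function.update z e (z e + δ), ?_, Function.update_self _ _ _,
    fun e' h => Function.update_of_ne h _ _, ?_⟩
  · intro x
    by_cases hx : x = e
    · rw [hx, Function.update_self]
      exact ⟨by linarith [(hz e).1], by linarith⟩
    · rw [Function.update_of_ne hx]; exact hz x
  · intro s
    rw [sum_shift_aux s z _ e (fun e' h => Function.update_of_ne h _ _),
      Function.update_self]
    split_ifs <;> ring

/-- for stationary `z` and an unsaturated edge `e` (`z e < b e`),
`e` is interesting iff `e` lies in the tail `T_v(z)`: in the deficit case every
such edge is interesting; in the quota-filling case, with critical tie `i` and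
cutting height `r` (max of `z` over tie `i`), `e` is interesting iff
`rank e < i`, or `rank e = i` and `z e < r`. -/
theorem mixedCF_interesting_iff_tail {E : Type} [Fintype E] [DecidableEq E]
    (b : E → ℝ) (q : ℝ) (rank : E → ℕ) (C : (E → ℝ) → (E → ℝ))
    (hC : IsMixedCF b q rank C)
    (z : E → ℝ) (hz : Adm b z) (hst : C z = z)
    (e : E) (he : z e < b e) :
    ((∑ e', z e') < q → InterestingEdge b C z e) ∧
    ((∑ e', z e') = q → ∀ (i : ℕ) (r : ℝ),
      (∑ e' ∈ univ.filter (fun e' => rank e' < i), z e') < q →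
      q ≤ (∑ e' ∈ univ.filter (fun e' => rank e' ≤ i), z e') →
      (∀ e', rank e' = i → z e' ≤ r) →
      (∃ e', rank e' = i ∧ z e' = r) →
      (InterestingEdge b C z e ↔ (rank e < i ∨ (rank e = i ∧ z e < r)))) := by
  constructor
  · -- deficit case
    intro hsum
    have hδ0 : 0 < min (b e - z e) (q - ∑ e', z e') := lt_min (by linarith) (by linarith)
    obtain ⟨z'', hadm, hze, hoff, hsums⟩ :=
      perturb b z hz e _ hδ0 (min_le_left _ _)
    have hsum'' : ∑ x, z'' x = (∑ x, z x) + min (b e - z e) (q - ∑ e', z e') := by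
      rw [hsums univ, if_pos (mem_univ e)]
    have hle : ∑ x, z'' x ≤ q := by
      have := min_le_right (b e - z e) (q - ∑ e', z e')
      rw [hsum'']; linarith
    have hCz := (hC z'' hadm).1 hle
    exact ⟨z'', hadm, by rw [hze]; linarith, hoff, by rw [hCz, hze]; linarith⟩
  · intro hq i r hlt hge hub hwit
    obtain ⟨e₀, he₀i, he₀r⟩ := hwit
    have hzub : ∀ x, 0 ≤ z x := fun x => (hz x).1
    -- S_{≤ i} = q
    have hSle : ∑ x ∈ univ.filter (fun x => rank x ≤ i), z x = q := by
      have hsplit := Finset.sum_filter_add_sum_filter_not univ (fun x => rank x ≤ i) z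
      have hnn : 0 ≤ ∑ x ∈ univ.filter (fun x => ¬ rank x ≤ i), z x :=
        Finset.sum_nonneg (fun x _ => hzub x)
      have hq' : ∑ x, z x = q := hq
      linarith
    have hSeq : (∑ x ∈ univ.filter (fun x => rank x < i), z x)
        + (∑ x ∈ univ.filter (fun x => rank x = i), z x) = q := by
      rw [← sum_le_split rank z i]; exact hSle
    constructor
    · -- interesting → tail
      rintro ⟨z'', hadm, hgt, hoff, hCgt⟩
      by_contra hcon
      push_neg at hcon
      obtain ⟨h1, h2⟩ := hcon
      have hδ0 : 0 < z'' e - z e := by linarith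
      have hsums : ∀ s : Finset E,
          ∑ x ∈ s, z'' x = (∑ x ∈ s, z x) + (if e ∈ s then z'' e - z e else 0) :=
        fun s => sum_shift_aux s z z'' e hoff
      have hzub'' : ∀ x, 0 ≤ z'' x := fun x => (hadm x).1
      have hsum'' : q < ∑ x, z'' x := by
        rw [hsums univ, if_pos (mem_univ e)]
        have hq' : ∑ x, z x = q := hq
        linarith
      obtain ⟨i', r', hr'0, hlt', hle', heq', hform'⟩ := (hC z'' hadm).2 hsum''
      have hSlt'' : ∑ x ∈ univ.filter (fun x => rank x < i), z'' x
          = (∑ x ∈ univ.filter (fun x => rank x < i), z x)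
            + (if rank e < i then z'' e - z e else 0) := by
        rw [hsums]; congr 1; simp
      have hSle'' : ∑ x ∈ univ.filter (fun x => rank x ≤ i), z'' x
          = (∑ x ∈ univ.filter (fun x => rank x ≤ i), z x)
            + (if rank e ≤ i then z'' e - z e else 0) := by
        rw [hsums]; congr 1; simp
      have hii' : i' = i := by
        refine crit_unique_s6 rank z'' hzub'' q i' i hlt' hle' ?_ ?_
        · rw [hSlt'', if_neg (by omega)]; linarith
        · rw [hSle'']
          split_ifs with h
          · linarith
          · linarith
      rw [hii'] at hform' heq'
      rcases Nat.lt_or_ge i (rank e) with hri | hri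
      · -- rank e > i': C z'' e = 0
        have := hform' e
        rw [if_neg (by omega), if_neg (by omega)] at this
        have := hzub e
        linarith
      · -- rank e = i and z e = r
        have hrei : rank e = i := by omega
        have hzer : z e = r := le_antisymm (hub e hrei) (h2 hrei)
        have hCe := hform' e
        rw [if_neg (by omega), if_pos hrei] at hCe
        have hr'r : r < r' := by
          have : r < min r' (z'' e) := by rw [← hCe]; rw [hzer] at hCgt; exact hCgt
          exact lt_of_lt_of_le this (min_le_left _ _)
        -- sum of mins over tie i strictly exceeds the tie sum
        have hmins : (∑ x ∈ univ.filter (fun x => rank x = i), z x)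
            < ∑ x ∈ univ.filter (fun x => rank x = i), min r' (z'' x) := by
          apply Finset.sum_lt_sum
          · intro x hx
            simp only [mem_filter, mem_univ, true_and] at hx
            by_cases hxe : x = e
            · subst hxe
              exact le_min (by linarith) (by linarith)
            · rw [hoff x hxe]
              exact le_min (by linarith [hub x hx, hr'r]) le_rfl
          · refine ⟨e, by simp [hrei], ?_⟩
            rw [min_def]
            split_ifs <;> linarith
        have hSlt''2 : (∑ x ∈ univ.filter (fun x => rank x < i), z'' x)
            = ∑ x ∈ univ.filter (fun x => rank x < i), z x := by
          rw [hsums, if_neg (by simp; omega)]; ring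
        rw [hSlt''2] at heq'
        linarith
    · -- tail → interesting
      intro htail
      have hm0 : 0 < min (b e - z e)
          (q - ∑ x ∈ univ.filter (fun x => rank x < i), z x) :=
        lt_min (by linarith) (by linarith)
      have hδ0 : 0 < min (b e - z e)
          (q - ∑ x ∈ univ.filter (fun x => rank x < i), z x) / 2 := by
        linarith
      set δ := min (b e - z e) (q - ∑ x ∈ univ.filter (fun x => rank x < i), z x) / 2
        with hδdef
      have hδb : δ ≤ b e - z e := by
        have h1 : min (b e - z e) (q - ∑ x ∈ univ.filter (fun x => rank x < i), z x)
            ≤ b e - z e := min_le_left _ _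
        rw [hδdef]; linarith
      have hδq : δ < q - ∑ x ∈ univ.filter (fun x => rank x < i), z x := by
        have h1 := min_le_right (b e - z e)
          (q - ∑ x ∈ univ.filter (fun x => rank x < i), z x)
        rw [hδdef]; linarith
      obtain ⟨z'', hadm, hze, hoff, hsums⟩ := perturb b z hz e δ hδ0 hδb
      have hzub'' : ∀ x, 0 ≤ z'' x := fun x => (hadm x).1
      have hsum'' : q < ∑ x, z'' x := by
        rw [hsums univ, if_pos (mem_univ e)]
        have hq' : ∑ x, z x = q := hq
        linarith
      obtain ⟨i', r', hr'0, hlt', hle', heq', hform'⟩ := (hC z'' hadm).2 hsum''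
      have hrei : rank e ≤ i := by rcases htail with h | ⟨h, _⟩ <;> omega
      have hii' : i' = i := by
        refine crit_unique_s6 rank z'' hzub'' q i' i hlt' hle' ?_ ?_
        · rw [hsums]
          split_ifs with h
          · simp only [mem_filter, mem_univ, true_and] at h
            linarith
          · linarith
        · rw [hsums, if_pos (by simp [hrei])]
          linarith
      rw [hii'] at hform' heq'
      rcases htail with h | ⟨h, hlt_r⟩
      · -- rank e < i
        refine ⟨z'', hadm, by rw [hze]; linarith, hoff, ?_⟩
        rw [hform' e, if_pos h, hze]; linarith
      · -- rank e = i, z e < r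
        refine ⟨z'', hadm, by rw [hze]; linarith, hoff, ?_⟩
        rw [hform' e, if_neg (by omega), if_pos h, hze]
        -- need z e < min r' (z e + δ); suffices z e < r'
        have hr' : z e < r' := by
          by_contra hr'
          push_neg at hr'
          -- sum of mins over tie i strictly below the tie sum
          have hmins : (∑ x ∈ univ.filter (fun x => rank x = i), min r' (z'' x))
              < ∑ x ∈ univ.filter (fun x => rank x = i), z x := by
            apply Finset.sum_lt_sum
            · intro x hx
              by_cases hxe : x = e
              · subst hxe
                exact le_trans (min_le_left _ _) hr'
              · rw [hoff x hxe]
                exact min_le_right _ _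
            · refine ⟨e₀, by simp [he₀i], ?_⟩
              have he₀e : e₀ ≠ e := by
                intro hh; rw [hh] at he₀r; linarith
              rw [hoff e₀ he₀e, he₀r]
              exact lt_of_le_of_lt (min_le_left _ _) (by linarith)
          have hSlt''2 : (∑ x ∈ univ.filter (fun x => rank x < i), z'' x)
              = ∑ x ∈ univ.filter (fun x => rank x < i), z x := by
            rw [hsums, if_neg (by simp; omega)]; ring
          rw [hSlt''2] at heq'
          linarith
        exact lt_min hr' (by linarith)
end

section
/- Let A and B be disjoint nonempty subsets of edges of a finite bipartite graph with parts F and W, such that for each edge fw ∈ A the set B_w of B-edges at w is nonempty, and for each edge fw ∈ B the set A_f of A-edges at f is nonempty. Then there exist nonzero nonnegative functions α : A → ℝ≥0 and β : B → ℝ≥0 such that: (i) for each vertex v covered by A ∪ B, Σ_{e ∈ A_v} α(e) = Σ_{e ∈ B_v} β(e); and (ii) for each f ∈ F, α is constant on A_f, and for each w ∈ W, β is constant on B_w. -/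
open Finset


section Aux

set_option linter.unusedSectionVars false

variable {F W : Type} [Fintype F] [Fintype W] [DecidableEq F] [DecidableEq W]

/-- The averaging operator on `F`-weights. -/
noncomputable def BalTmap (A B : Finset (F × W)) : (F → ℝ) →ₗ[ℝ] (F → ℝ) :=
  LinearMap.pi fun f =>
    (((A.filter (fun p => p.1 = f)).card : ℝ)⁻¹ •
      ∑ p ∈ B.filter (fun p => p.1 = f),
        ((((B.filter (fun q => q.2 = p.2)).card : ℝ)⁻¹ •
          ∑ q ∈ A.filter (fun q => q.2 = p.2), LinearMap.proj q.1) :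
            (F → ℝ) →ₗ[ℝ] ℝ))

lemma BalTmap_apply (A B : Finset (F × W)) (a : F → ℝ) (f : F) :
    BalTmap A B a f =
      ((A.filter (fun p => p.1 = f)).card : ℝ)⁻¹ *
        ∑ p ∈ B.filter (fun p => p.1 = f),
          ((B.filter (fun q => q.2 = p.2)).card : ℝ)⁻¹ *
            ∑ q ∈ A.filter (fun q => q.2 = p.2), a q.1 := by
  simp [BalTmap, LinearMap.pi_apply, LinearMap.smul_apply, LinearMap.sum_apply,
    LinearMap.proj_apply, smul_eq_mul]

lemma fib1 (s : Finset (F × W)) (g : F → ℝ) :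
    ∑ q ∈ s, g q.1 = ∑ f : F, ((s.filter (fun q => q.1 = f)).card : ℝ) * g f := by
  rw [← Finset.sum_fiberwise_of_maps_to (g := fun q : F × W => q.1)
    (fun q _ => Finset.mem_univ q.1) (fun q => g q.1)]
  refine Finset.sum_congr rfl fun f _ => ?_
  rw [Finset.sum_congr rfl (fun q hq => congrArg g (Finset.mem_filter.mp hq).2),
    Finset.sum_const, nsmul_eq_mul]

lemma fib2 (s : Finset (F × W)) (g : W → ℝ) :
    ∑ q ∈ s, g q.2 = ∑ w : W, ((s.filter (fun q => q.2 = w)).card : ℝ) * g w := by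
  rw [← Finset.sum_fiberwise_of_maps_to (g := fun q : F × W => q.2)
    (fun q _ => Finset.mem_univ q.2) (fun q => g q.2)]
  refine Finset.sum_congr rfl fun w _ => ?_
  rw [Finset.sum_congr rfl (fun q hq => congrArg g (Finset.mem_filter.mp hq).2),
    Finset.sum_const, nsmul_eq_mul]

lemma BalTmap_invariant (A B : Finset (F × W))
    (hAB : ∀ f, (A.filter (fun p => p.1 = f)).card = 0 → B.filter (fun p => p.1 = f) = ∅)
    (hBA : ∀ w, (B.filter (fun q => q.2 = w)).card = 0 → A.filter (fun q => q.2 = w) = ∅)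
    (a : F → ℝ) :
    ∑ q ∈ A, (BalTmap A B a) q.1 = ∑ q ∈ A, a q.1 := by
  rw [fib1 A (BalTmap A B a)]
  have step1 : ∀ f : F, ((A.filter (fun p => p.1 = f)).card : ℝ) * BalTmap A B a f
      = ∑ p ∈ B.filter (fun p => p.1 = f),
          ((B.filter (fun q => q.2 = p.2)).card : ℝ)⁻¹ *
            ∑ q ∈ A.filter (fun q => q.2 = p.2), a q.1 := by
    intro f
    by_cases hf : (A.filter (fun p => p.1 = f)).card = 0
    · rw [BalTmap_apply, hAB f hf]
      simp [hf]
    · rw [BalTmap_apply, ← mul_assoc, mul_inv_cancel₀ (Nat.cast_ne_zero.mpr hf), one_mul]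
  rw [Finset.sum_congr rfl fun f _ => step1 f]
  rw [Finset.sum_fiberwise_of_maps_to (g := fun p : F × W => p.1)
    (fun p _ => Finset.mem_univ p.1)
    (fun p => ((B.filter (fun q => q.2 = p.2)).card : ℝ)⁻¹ *
      ∑ q ∈ A.filter (fun q => q.2 = p.2), a q.1)]
  rw [fib2 B (fun w => ((B.filter (fun q => q.2 = w)).card : ℝ)⁻¹ *
      ∑ q ∈ A.filter (fun q => q.2 = w), a q.1)]
  have step2 : ∀ w : W, ((B.filter (fun q => q.2 = w)).card : ℝ) *
      (((B.filter (fun q => q.2 = w)).card : ℝ)⁻¹ *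
        ∑ q ∈ A.filter (fun q => q.2 = w), a q.1)
      = ∑ q ∈ A.filter (fun q => q.2 = w), a q.1 := by
    intro w
    by_cases hw : (B.filter (fun q => q.2 = w)).card = 0
    · rw [hBA w hw]
      simp
    · rw [← mul_assoc, mul_inv_cancel₀ (Nat.cast_ne_zero.mpr hw), one_mul]
  rw [Finset.sum_congr rfl fun w _ => step2 w]
  exact Finset.sum_fiberwise_of_maps_to (g := fun q : F × W => q.2)
    (fun q _ => Finset.mem_univ q.2) (fun q => a q.1)

lemma exists_balanced_fixed_point (A B : Finset (F × W)) (hA : A.Nonempty)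
    (hAB : ∀ f, (A.filter (fun p => p.1 = f)).card = 0 → B.filter (fun p => p.1 = f) = ∅)
    (hBA : ∀ w, (B.filter (fun q => q.2 = w)).card = 0 → A.filter (fun q => q.2 = w) = ∅) :
    ∃ a : F → ℝ, (∀ f, 0 ≤ a f) ∧
      (∀ f, (A.filter (fun p => p.1 = f)).card = 0 → a f = 0) ∧
      (∑ q ∈ A, a q.1 = 1) ∧ BalTmap A B a = a := by
  classical
  set S : Set (F → ℝ) := {a | (∀ f, 0 ≤ a f) ∧
      (∀ f, (A.filter (fun p => p.1 = f)).card = 0 → a f = 0) ∧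
      (∑ q ∈ A, a q.1 = 1)} with hS
  -- boundedness of members of S
  have hbound : ∀ a ∈ S, ∀ f, a f ≤ 1 := by
    rintro a ⟨hpos, hsupp, hsum⟩ f
    by_cases hf : (A.filter (fun p => p.1 = f)).card = 0
    · rw [hsupp f hf]; norm_num
    · have h1le : (1 : ℝ) ≤ ((A.filter (fun p => p.1 = f)).card : ℝ) := by
        exact_mod_cast Nat.one_le_iff_ne_zero.mpr hf
      calc a f ≤ ((A.filter (fun p => p.1 = f)).card : ℝ) * a f :=
            le_mul_of_one_le_left (hpos f) h1le
        _ ≤ ∑ f' : F, ((A.filter (fun p => p.1 = f')).card : ℝ) * a f' :=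
            Finset.single_le_sum
              (f := fun f' => ((A.filter (fun p => p.1 = f')).card : ℝ) * a f')
              (fun f' _ => mul_nonneg (Nat.cast_nonneg _) (hpos f')) (Finset.mem_univ f)
        _ = 1 := by rw [← fib1 A a, hsum]
  -- S is closed
  have hclosed : IsClosed S := by
    have hrw : S = (⋂ f, {a : F → ℝ | 0 ≤ a f}) ∩
        ((⋂ f ∈ {f : F | (A.filter (fun p => p.1 = f)).card = 0}, {a : F → ℝ | a f = 0}) ∩
          {a : F → ℝ | ∑ q ∈ A, a q.1 = 1}) := by
      ext a
      simp only [hS, Set.mem_setOf_eq, Set.mem_inter_iff, Set.mem_iInter]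

    rw [hrw]
    refine IsClosed.inter (isClosed_iInter fun f =>
      isClosed_le continuous_const (continuous_apply f)) (IsClosed.inter ?_ ?_)
    · exact isClosed_biInter fun f _ => isClosed_eq (continuous_apply f) continuous_const
    · exact isClosed_eq (continuous_finset_sum A fun q _ => continuous_apply q.1)
        continuous_const
  -- S is compact
  have hsub : S ⊆ Set.pi Set.univ fun _ : F => Set.Icc (0 : ℝ) 1 := by
    intro a ha f _
    exact ⟨ha.1 f, hbound a ha f⟩
  have hScomp : IsCompact S :=
    (isCompact_univ_pi fun _ : F => isCompact_Icc).of_isClosed_subset hclosed hsub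
  -- a starting point in S
  obtain ⟨p₀, hp₀⟩ := hA
  have hcard0 : (A.filter (fun p => p.1 = p₀.1)).card ≠ 0 :=
    Finset.card_ne_zero_of_mem (Finset.mem_filter.mpr ⟨hp₀, rfl⟩)
  set x₀ : F → ℝ := fun f =>
    if f = p₀.1 then ((A.filter (fun p => p.1 = p₀.1)).card : ℝ)⁻¹ else 0 with hx₀
  have hx₀S : x₀ ∈ S := by
    refine ⟨fun f => ?_, fun f hf => ?_, ?_⟩
    · simp only [hx₀]
      split
      · positivity
      · exact le_rfl
    · simp only [hx₀]
      split
      · rename_i h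
        exact absurd (h ▸ hf) hcard0
      · rfl
    · rw [fib1 A x₀, Finset.sum_eq_single p₀.1]
      · simp only [hx₀, if_pos rfl]
        exact mul_inv_cancel₀ (Nat.cast_ne_zero.mpr hcard0)
      · intro f _ hne
        simp [hx₀, hne]
      · intro h
        exact absurd (Finset.mem_univ p₀.1) h
  -- the operator maps S into S
  have hmaps : ∀ a ∈ S, BalTmap A B a ∈ S := by
    rintro a ⟨hpos, hsupp, hsum⟩
    refine ⟨fun f => ?_, fun f hf => ?_, ?_⟩
    · rw [BalTmap_apply]
      exact mul_nonneg (inv_nonneg.mpr (Nat.cast_nonneg _))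
        (Finset.sum_nonneg fun p _ => mul_nonneg (inv_nonneg.mpr (Nat.cast_nonneg _))
          (Finset.sum_nonneg fun q _ => hpos q.1))
    · rw [BalTmap_apply, hf]
      simp
    · rw [BalTmap_invariant A B hAB hBA a, hsum]
  -- the iterates
  set iter : ℕ → (F → ℝ) := fun k => (⇑(BalTmap A B))^[k] x₀ with hiterdef
  have hiter : ∀ k, iter k ∈ S := by
    intro k
    induction k with
    | zero => exact hx₀S
    | succ k ih =>
        simp only [hiterdef, Function.iterate_succ_apply']
        exact hmaps _ ih
  -- the Cesàro averages
  set v : ℕ → (F → ℝ) := fun n => ((n : ℝ) + 1)⁻¹ • ∑ k ∈ Finset.range (n + 1), iter k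
    with hvdef
  have hnne : ∀ n : ℕ, ((n : ℝ) + 1) ≠ 0 := fun n => by positivity
  have hvmem : ∀ n, v n ∈ S := by
    intro n
    refine ⟨fun f => ?_, fun f hf => ?_, ?_⟩
    · simp only [hvdef, Pi.smul_apply, Finset.sum_apply, smul_eq_mul]
      exact mul_nonneg (inv_nonneg.mpr (by positivity))
        (Finset.sum_nonneg fun k _ => (hiter k).1 f)
    · simp only [hvdef, Pi.smul_apply, Finset.sum_apply, smul_eq_mul]
      rw [Finset.sum_congr rfl fun k _ => (hiter k).2.1 f hf]
      simp
    · simp only [hvdef, Pi.smul_apply, Finset.sum_apply, smul_eq_mul]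
      rw [← Finset.mul_sum, Finset.sum_comm]
      rw [Finset.sum_congr rfl fun k (_ : k ∈ Finset.range (n+1)) => (hiter k).2.2]
      simp only [Finset.sum_const, Finset.card_range, nsmul_eq_mul, mul_one]
      rw [Nat.cast_add, Nat.cast_one]
      exact inv_mul_cancel₀ (hnne n)
  -- Cesàro difference formula
  have hdiff : ∀ n, BalTmap A B (v n) - v n = ((n : ℝ) + 1)⁻¹ • (iter (n + 1) - iter 0) := by
    intro n
    have hTv : BalTmap A B (v n)
        = ((n : ℝ) + 1)⁻¹ • ∑ k ∈ Finset.range (n + 1), iter (k + 1) := by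
      simp only [hvdef, map_smul, map_sum]
      congr 1
      refine Finset.sum_congr rfl fun k _ => ?_
      simp only [hiterdef, Function.iterate_succ_apply']
    rw [hTv, hvdef]
    rw [← smul_sub, ← Finset.sum_sub_distrib, Finset.sum_range_sub (f := iter)]
  -- the difference tends to zero
  have hto0 : Filter.Tendsto (fun n => BalTmap A B (v n) - v n) Filter.atTop (nhds 0) := by
    apply squeeze_zero_norm (a := fun n : ℕ => ((n : ℝ) + 1)⁻¹)
    · intro n
      rw [hdiff n, norm_smul]
      have h1 : ‖iter (n + 1) - iter 0‖ ≤ 1 := by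
        rw [pi_norm_le_iff_of_nonneg zero_le_one]
        intro f
        rw [Pi.sub_apply, Real.norm_eq_abs, abs_le]
        constructor
        · have := (hiter (n + 1)).1 f
          have := hbound _ (hiter 0) f
          linarith
        · have := hbound _ (hiter (n + 1)) f
          have := (hiter 0).1 f
          linarith
      calc ‖(((n : ℝ) + 1)⁻¹ : ℝ)‖ * ‖iter (n + 1) - iter 0‖
          ≤ ‖(((n : ℝ) + 1)⁻¹ : ℝ)‖ * 1 := by
            exact mul_le_mul_of_nonneg_left h1 (norm_nonneg _)
        _ = ((n : ℝ) + 1)⁻¹ := by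
            rw [mul_one, Real.norm_eq_abs, abs_of_nonneg (by positivity)]
    · simpa only [one_div] using (tendsto_one_div_add_atTop_nhds_zero_nat :
        Filter.Tendsto (fun n : ℕ => 1 / ((n : ℝ) + 1)) Filter.atTop (nhds 0))
  -- extract a convergent subsequence of the averages
  obtain ⟨a, haS, φ, hφ, hconv⟩ := hScomp.tendsto_subseq hvmem
  have hTcont : Continuous (BalTmap A B) := LinearMap.continuous_of_finiteDimensional _
  have l1 : Filter.Tendsto (fun k => BalTmap A B (v (φ k))) Filter.atTop
      (nhds (BalTmap A B a)) := (hTcont.tendsto a).comp hconv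
  have l2 : Filter.Tendsto (fun k => BalTmap A B (v (φ k)) - v (φ k)) Filter.atTop
      (nhds 0) := hto0.comp hφ.tendsto_atTop
  have l3 := l1.sub l2
  simp only [sub_sub_cancel, sub_zero] at l3
  have hfix : BalTmap A B a = a := tendsto_nhds_unique l3 hconv
  exact ⟨a, haS.1, haS.2.1, haS.2.2, hfix⟩

end Aux

/-- Lemma on balanced aligned weights, via Brouwer:
Let `A, B` be disjoint nonempty sets of edges of a finite bipartite graph
(edges are pairs `(f, w)`), such that every `A`-edge `fw` has some `B`-edge at
`w` and every `B`-edge `fw` has some `A`-edge at `f`.  Then there are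
nonnegative functions `α, β`, not identically zero on `A` resp. `B`, such that
(i) at every vertex the total `α`-value of incident `A`-edges equals the total
`β`-value of incident `B`-edges, and (ii) `α` is constant on the `A`-edges at
each `f ∈ F` and `β` is constant on the `B`-edges at each `w ∈ W`. -/
theorem balanced_aligned_weights {F W : Type} [Fintype F] [Fintype W]
    [DecidableEq F] [DecidableEq W]
    (A B : Finset (F × W)) (hA : A.Nonempty) (hB : B.Nonempty)
    (hdisj : Disjoint A B)
    (h1 : ∀ p ∈ A, ∃ f', (f', p.2) ∈ B)
    (h2 : ∀ p ∈ B, ∃ w', (p.1, w') ∈ A) :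
    ∃ α β : F × W → ℝ,
      (∀ p, 0 ≤ α p) ∧ (∀ p, 0 ≤ β p) ∧
      (∃ p ∈ A, α p ≠ 0) ∧ (∃ p ∈ B, β p ≠ 0) ∧
      (∀ f : F, ∑ p ∈ A.filter (fun p => p.1 = f), α p
              = ∑ p ∈ B.filter (fun p => p.1 = f), β p) ∧
      (∀ w : W, ∑ p ∈ A.filter (fun p => p.2 = w), α p
              = ∑ p ∈ B.filter (fun p => p.2 = w), β p) ∧
      (∀ f : F, ∀ p ∈ A, ∀ p' ∈ A, p.1 = f → p'.1 = f → α p = α p') ∧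
      (∀ w : W, ∀ p ∈ B, ∀ p' ∈ B, p.2 = w → p'.2 = w → β p = β p') := by
  classical
  have hAB : ∀ f, (A.filter (fun p => p.1 = f)).card = 0 →
      B.filter (fun p => p.1 = f) = ∅ := by
    intro f hf
    rw [Finset.card_eq_zero, Finset.filter_eq_empty_iff] at hf
    rw [Finset.filter_eq_empty_iff]
    intro p hp hpf
    obtain ⟨w', hw'⟩ := h2 p hp
    exact hf hw' hpf
  have hBA : ∀ w, (B.filter (fun q => q.2 = w)).card = 0 →
      A.filter (fun q => q.2 = w) = ∅ := by
    intro w hw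
    rw [Finset.card_eq_zero, Finset.filter_eq_empty_iff] at hw
    rw [Finset.filter_eq_empty_iff]
    intro p hp hpw
    obtain ⟨f', hf'⟩ := h1 p hp
    exact hw hf' hpw
  obtain ⟨a, hapos, hasupp, hasum, hafix⟩ := exists_balanced_fixed_point A B hA hAB hBA
  set b : W → ℝ := fun w =>
    ((B.filter (fun q => q.2 = w)).card : ℝ)⁻¹ *
      ∑ q ∈ A.filter (fun q => q.2 = w), a q.1 with hbdef
  have hbpos : ∀ w, 0 ≤ b w := fun w =>
    mul_nonneg (inv_nonneg.mpr (Nat.cast_nonneg _))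
      (Finset.sum_nonneg fun q _ => hapos q.1)
  -- sums of constants over fibers
  have hsumA1 : ∀ f : F, ∑ p ∈ A.filter (fun p => p.1 = f), a p.1
      = ((A.filter (fun p => p.1 = f)).card : ℝ) * a f := by
    intro f
    rw [Finset.sum_congr rfl (fun p hp => congrArg a (Finset.mem_filter.mp hp).2),
      Finset.sum_const, nsmul_eq_mul]
  have hsumB2 : ∀ w : W, ∑ p ∈ B.filter (fun p => p.2 = w), b p.2
      = ((B.filter (fun p => p.2 = w)).card : ℝ) * b w := by
    intro w
    rw [Finset.sum_congr rfl (fun p hp => congrArg b (Finset.mem_filter.mp hp).2),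
      Finset.sum_const, nsmul_eq_mul]
  -- the per-f balance condition
  have perF : ∀ f : F, ∑ p ∈ A.filter (fun p => p.1 = f), a p.1
      = ∑ p ∈ B.filter (fun p => p.1 = f), b p.2 := by
    intro f
    have hfx : a f = ((A.filter (fun p => p.1 = f)).card : ℝ)⁻¹ *
        ∑ p ∈ B.filter (fun p => p.1 = f), b p.2 := by
      conv_lhs => rw [← hafix]
      rw [BalTmap_apply]
    by_cases hf : (A.filter (fun p => p.1 = f)).card = 0
    · rw [Finset.card_eq_zero] at hf
      rw [hf, hAB f (by rw [hf]; rfl)]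
      simp
    · rw [hsumA1 f, hfx, ← mul_assoc,
        mul_inv_cancel₀ (Nat.cast_ne_zero.mpr hf), one_mul]
  -- the per-w balance condition
  have perW : ∀ w : W, ∑ p ∈ A.filter (fun p => p.2 = w), a p.1
      = ∑ p ∈ B.filter (fun p => p.2 = w), b p.2 := by
    intro w
    by_cases hw : (B.filter (fun q => q.2 = w)).card = 0
    · rw [hBA w hw, Finset.card_eq_zero.mp hw]
      simp
    · rw [hsumB2 w, hbdef, ← mul_assoc,
        mul_inv_cancel₀ (Nat.cast_ne_zero.mpr hw), one_mul]
  -- a nonzero α-edge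
  obtain ⟨q, hqA, hqne⟩ := Finset.exists_ne_zero_of_sum_ne_zero
    (f := fun q : F × W => a q.1) (by rw [hasum]; exact one_ne_zero)
  -- a nonzero β-edge
  have hsumpos : (0 : ℝ) < ∑ p ∈ B.filter (fun p => p.2 = q.2), b p.2 := by
    rw [← perW q.2]
    have hqmem : q ∈ A.filter (fun p => p.2 = q.2) := Finset.mem_filter.mpr ⟨hqA, rfl⟩
    have := Finset.single_le_sum (f := fun p : F × W => a p.1)
      (fun p _ => hapos p.1) hqmem
    have hq0 : 0 < a q.1 := lt_of_le_of_ne (hapos q.1) (Ne.symm hqne)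
    linarith
  obtain ⟨p', hp'B, hp'ne⟩ := Finset.exists_ne_zero_of_sum_ne_zero
    (f := fun p : F × W => b p.2) (ne_of_gt hsumpos)
  refine ⟨fun p => a p.1, fun p => b p.2, fun p => hapos p.1, fun p => hbpos p.2,
    ⟨q, hqA, hqne⟩, ⟨p', (Finset.mem_filter.mp hp'B).1, hp'ne⟩, perF, perW, ?_, ?_⟩
  · intro f p _ p' _ hp hp'
    exact congrArg a (hp.trans hp'.symm)
  · intro w p _ p' _ hp hp'
    exact congrArg b (hp.trans hp'.symm)
end

section
/- The vertices of the convex hull of the set of closed functions on a finite weighted poset (R, τ, ⋖) are exactly the fully closed functions, i.e., the closed functions λ with λ(ρ) ∈ {0, τ(ρ)} for all ρ ∈ R. -/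
/-- A function `lam : R → ℝ` with `0 ≤ lam ≤ τ` is *closed* for the strict
order `lt` if `lam ρ > 0` and `ρ' ⋖ ρ` imply `lam ρ' = τ ρ'`. -/
def ClosedFn {R : Type} (lt : R → R → Prop) (τ : R → ℝ) (lam : R → ℝ) : Prop :=
  (∀ ρ, 0 ≤ lam ρ ∧ lam ρ ≤ τ ρ) ∧
  (∀ ρ ρ', 0 < lam ρ → lt ρ' ρ → lam ρ' = τ ρ')

/-- the extreme points (vertices) of the convex hull of the set
of closed functions on a finite weighted poset are exactly the fully closed
functions, i.e. the closed functions taking only the values `0` or `τ ρ`. -/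
theorem extremePoints_convexHull_closed {R : Type} [Fintype R]
    (lt : R → R → Prop) (htrans : Transitive lt) (hirr : Irreflexive lt)
    (τ : R → ℝ) (hτ : ∀ ρ, 0 < τ ρ) :
    Set.extremePoints ℝ (convexHull ℝ {lam : R → ℝ | ClosedFn lt τ lam})
      = {lam : R → ℝ | ClosedFn lt τ lam ∧ ∀ ρ, lam ρ = 0 ∨ lam ρ = τ ρ} := by
  classical
  set S : Set (R → ℝ) := {lam : R → ℝ | ClosedFn lt τ lam} with hS
  -- The box containing everything
  have hboxconv : Convex ℝ {z : R → ℝ | ∀ ρ, 0 ≤ z ρ ∧ z ρ ≤ τ ρ} := by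
    intro x hx y hy a b ha hb hab
    intro ρ
    have hx := hx ρ; have hy := hy ρ
    constructor
    · have := add_nonneg (mul_nonneg ha hx.1) (mul_nonneg hb hy.1)
      simpa using this
    · have : a * x ρ + b * y ρ ≤ a * τ ρ + b * τ ρ := by
        gcongr
        exacts [hx.2, hy.2]
      simpa [← add_mul, hab] using this
  have hhull : convexHull ℝ S ⊆ {z : R → ℝ | ∀ ρ, 0 ≤ z ρ ∧ z ρ ≤ τ ρ} :=
    convexHull_min (fun z hz => hz.1) hboxconv
  ext lam
  simp only [Set.mem_setOf_eq, mem_extremePoints]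
  constructor
  · rintro ⟨hmem, hext⟩
    have hlamext : lam ∈ Set.extremePoints ℝ (convexHull ℝ S) := mem_extremePoints.2 ⟨hmem, hext⟩
    have hlamS : lam ∈ S := extremePoints_convexHull_subset hlamext
    have hlam : ClosedFn lt τ lam := hlamS
    refine ⟨hlam, ?_⟩
    intro ρ₀
    by_contra h
    push_neg at h
    obtain ⟨h0, hT⟩ := h
    have hb := hlam.1 ρ₀
    have hpos : 0 < lam ρ₀ := lt_of_le_of_ne hb.1 (Ne.symm h0)
    have hlt : lam ρ₀ < τ ρ₀ := lt_of_le_of_ne hb.2 hT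
    set ε : ℝ := min (lam ρ₀) (τ ρ₀ - lam ρ₀) with hε
    have hεpos : 0 < ε := lt_min hpos (by linarith)
    have hε1 : ε ≤ lam ρ₀ := min_le_left _ _
    have hε2 : ε ≤ τ ρ₀ - lam ρ₀ := min_le_right _ _
    set x : R → ℝ := fun ρ => if ρ = ρ₀ then lam ρ - ε else lam ρ with hx
    set y : R → ℝ := fun ρ => if ρ = ρ₀ then lam ρ + ε else lam ρ with hy
    have hxval : ∀ ρ, ρ ≠ ρ₀ → x ρ = lam ρ := fun ρ h => by simp [hx, h]
    have hyval : ∀ ρ, ρ ≠ ρ₀ → y ρ = lam ρ := fun ρ h => by simp [hy, h]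
    have hxS : x ∈ S := by
      constructor
      · intro ρ
        by_cases hρ : ρ = ρ₀
        · subst hρ; simp only [hx, if_pos rfl]
          exact ⟨by linarith, by linarith⟩
        · rw [hxval ρ hρ]; exact hlam.1 ρ
      · intro ρ ρ' hρpos hltρ
        have hne' : ρ' ≠ ρ₀ := by
          intro he
          by_cases hρ : ρ = ρ₀
          · exact hirr ρ₀ (by rwa [he, hρ] at hltρ)
          · rw [hxval ρ hρ] at hρpos
            have h2 := hlam.2 ρ ρ' hρpos hltρ
            rw [he] at h2
            linarith
        rw [hxval ρ' hne']
        by_cases hρ : ρ = ρ₀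
        · subst hρ; exact hlam.2 _ _ hpos hltρ
        · rw [hxval ρ hρ] at hρpos
          exact hlam.2 _ _ hρpos hltρ
    have hyS : y ∈ S := by
      constructor
      · intro ρ
        by_cases hρ : ρ = ρ₀
        · subst hρ; simp only [hy, if_pos rfl]
          exact ⟨by linarith, by linarith⟩
        · rw [hyval ρ hρ]; exact hlam.1 ρ
      · intro ρ ρ' hρpos hltρ
        have hne' : ρ' ≠ ρ₀ := by
          intro he
          by_cases hρ : ρ = ρ₀
          · exact hirr ρ₀ (by rwa [he, hρ] at hltρ)
          · rw [hyval ρ hρ] at hρpos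
            have h2 := hlam.2 ρ ρ' hρpos hltρ
            rw [he] at h2
            linarith
        rw [hyval ρ' hne']
        by_cases hρ : ρ = ρ₀
        · subst hρ; exact hlam.2 _ _ hpos hltρ
        · rw [hyval ρ hρ] at hρpos
          exact hlam.2 _ _ hρpos hltρ
    have hxhull : x ∈ convexHull ℝ S := subset_convexHull ℝ S hxS
    have hyhull : y ∈ convexHull ℝ S := subset_convexHull ℝ S hyS
    have hmemseg : lam ∈ openSegment ℝ x y := by
      refine ⟨1/2, 1/2, by norm_num, by norm_num, by norm_num, ?_⟩
      funext ρ
      by_cases hρ : ρ = ρ₀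
      · subst hρ
        simp only [Pi.add_apply, Pi.smul_apply, hx, hy, smul_eq_mul, if_true, eq_self_iff_true]
        ring
      · simp only [Pi.add_apply, Pi.smul_apply, hxval ρ hρ, hyval ρ hρ, smul_eq_mul]
        ring
    have := (hext x hxhull y hyhull hmemseg).1
    have : x ρ₀ = lam ρ₀ := by rw [this]
    simp only [hx, if_pos rfl] at this
    linarith
  · rintro ⟨hlam, hfull⟩
    refine ⟨subset_convexHull ℝ S hlam, ?_⟩
    intro x hx y hy hseg
    obtain ⟨a, b, ha, hb, hab, hsum⟩ := hseg
    have hxbox := hhull hx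
    have hybox := hhull hy
    have hkey : ∀ ρ, x ρ = lam ρ ∧ y ρ = lam ρ := by
      intro ρ
      have hs : a * x ρ + b * y ρ = lam ρ := by
        have := congrFun hsum ρ
        simpa [smul_eq_mul] using this
      have hxb := hxbox ρ
      have hyb := hybox ρ
      rcases hfull ρ with h0 | hT
      · rw [h0] at hs ⊢
        constructor <;> nlinarith [mul_nonneg ha.le hxb.1, mul_nonneg hb.le hyb.1,
          mul_pos ha hb]
      · rw [hT] at hs ⊢
        constructor <;> nlinarith [mul_le_mul_of_nonneg_left hxb.2 ha.le,
          mul_le_mul_of_nonneg_left hyb.2 hb.le]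
    constructor <;> funext ρ
    · exact (hkey ρ).1
    · exact (hkey ρ).2
end

section
/- The convex hull of the set of closed functions on a finite weighted poset (R, τ, ⋖) equals the polytope {λ ∈ ℝ^R : 0 ≤ λ(ρ) ≤ τ(ρ) for all ρ, and λ(ρ)/τ(ρ) ≤ λ(ρ')/τ(ρ') whenever ρ' ⋖ ρ}. -/
private lemma aux_hull {R : Type} [Fintype R] (lt : R → R → Prop)
    (τ : R → ℝ) (hτ : ∀ ρ, 0 < τ ρ) :
    ∀ (n : ℕ) (μ : R → ℝ),
      (∀ ρ, 0 ≤ μ ρ ∧ μ ρ ≤ 1 ∧ ∀ ρ', lt ρ' ρ → μ ρ ≤ μ ρ') →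
      ((Finset.univ.image μ).filter (fun v => 0 < v)).card ≤ n →
      (fun ρ => τ ρ * μ ρ) ∈ convexHull ℝ {lam : R → ℝ | ClosedFn lt τ lam} := by
  intro n
  induction n with
  | zero =>
    intro μ hμ hcard
    have hz : ∀ ρ, μ ρ = 0 := by
      intro ρ
      by_contra h
      have hpos : 0 < μ ρ := lt_of_le_of_ne (hμ ρ).1 (Ne.symm h)
      have hmem : μ ρ ∈ (Finset.univ.image μ).filter (fun v => 0 < v) := by
        simp [hpos]
      have := Finset.card_pos.mpr ⟨_, hmem⟩
      omega
    apply subset_convexHull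
    refine ⟨fun ρ => ⟨by simp [hz ρ], by simp [hz ρ, (hτ ρ).le]⟩,
      fun ρ ρ' h _ => absurd h (by simp [hz ρ])⟩
  | succ n ih =>
    intro μ hμ hcard
    set S := (Finset.univ.image μ).filter (fun v => 0 < v) with hS
    by_cases hSe : S = ∅
    · -- μ = 0, same as base case
      have hz : ∀ ρ, μ ρ = 0 := by
        intro ρ
        by_contra h
        have hpos : 0 < μ ρ := lt_of_le_of_ne (hμ ρ).1 (Ne.symm h)
        have hmem : μ ρ ∈ S := by simp [hS, hpos]
        simp [hSe] at hmem
      apply subset_convexHull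
      refine ⟨fun ρ => ⟨by simp [hz ρ], by simp [hz ρ, (hτ ρ).le]⟩,
        fun ρ ρ' h _ => absurd h (by simp [hz ρ])⟩
    · have hSne : S.Nonempty := Finset.nonempty_of_ne_empty hSe
      set a := S.min' hSne with ha
      have haS : a ∈ S := S.min'_mem hSne
      have ha_pos : 0 < a := by
        have := Finset.mem_filter.mp haS
        exact this.2
      have ha_val : ∃ ρ₀, μ ρ₀ = a := by
        have := Finset.mem_filter.mp haS
        rcases Finset.mem_image.mp this.1 with ⟨ρ₀, _, h⟩
        exact ⟨ρ₀, h⟩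
      have ha_le1 : a ≤ 1 := by
        rcases ha_val with ⟨ρ₀, h⟩
        rw [← h]; exact (hμ ρ₀).2.1
      have hmin : ∀ ρ, 0 < μ ρ → a ≤ μ ρ := by
        intro ρ hρ
        apply S.min'_le
        simp [hS, hρ]
      by_cases ha1 : a = 1
      · -- μ is 0/1 valued; τ * μ is itself closed
        apply subset_convexHull
        constructor
        · intro ρ
          constructor
          · exact mul_nonneg (hτ ρ).le (hμ ρ).1
          · calc τ ρ * μ ρ ≤ τ ρ * 1 := mul_le_mul_of_nonneg_left (hμ ρ).2.1 (hτ ρ).le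
              _ = τ ρ := mul_one _
        · intro ρ ρ' hpos hlt
          have hμρ : 0 < μ ρ := by
            by_contra h
            have : μ ρ = 0 := le_antisymm (not_lt.mp h) (hμ ρ).1
            simp [this] at hpos
          have h1 : μ ρ' = 1 := by
            have h := (hμ ρ).2.2 ρ' hlt
            have : a ≤ μ ρ' := le_trans (hmin ρ hμρ) h
            rw [ha1] at this
            exact le_antisymm (hμ ρ').2.1 this
          simp [h1]
      · have ha_lt1 : a < 1 := lt_of_le_of_ne ha_le1 ha1
        set χ : R → ℝ := fun ρ => if 0 < μ ρ then 1 else 0 with hχ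
        set ψ : R → ℝ := fun ρ => if 0 < μ ρ then (μ ρ - a) / (1 - a) else 0 with hψ
        have h1a : (0:ℝ) < 1 - a := by linarith
        -- χ scaled is a closed function
        have hχ_closed : (fun ρ => τ ρ * χ ρ) ∈ {lam : R → ℝ | ClosedFn lt τ lam} := by
          constructor
          · intro ρ
            by_cases h : 0 < μ ρ <;> simp [hχ, h, (hτ ρ).le]
          · intro ρ ρ' hpos hlt
            have hμρ : 0 < μ ρ := by
              by_contra h
              simp [hχ, h] at hpos
            have : 0 < μ ρ' := lt_of_lt_of_le hμρ ((hμ ρ).2.2 ρ' hlt)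
            simp [hχ, this]
        -- ψ satisfies the polytope conditions
        have hψ_poly : ∀ ρ, 0 ≤ ψ ρ ∧ ψ ρ ≤ 1 ∧ ∀ ρ', lt ρ' ρ → ψ ρ ≤ ψ ρ' := by
          intro ρ
          refine ⟨?_, ?_, ?_⟩
          · by_cases h : 0 < μ ρ
            · simp only [hψ, if_pos h]
              apply div_nonneg _ h1a.le
              linarith [hmin ρ h]
            · simp [hψ, h]
          · by_cases h : 0 < μ ρ
            · simp only [hψ, if_pos h]
              rw [div_le_one h1a]
              linarith [(hμ ρ).2.1]
            · simp [hψ, h]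
          · intro ρ' hlt
            have hle := (hμ ρ).2.2 ρ' hlt
            by_cases h : 0 < μ ρ
            · have h' : 0 < μ ρ' := lt_of_lt_of_le h hle
              simp only [hψ, if_pos h, if_pos h']
              exact (div_le_div_iff_of_pos_right h1a).mpr (by linarith)
            · simp only [hψ, if_neg h]
              by_cases h' : 0 < μ ρ'
              · simp only [if_pos h']
                apply div_nonneg _ h1a.le
                linarith [hmin ρ' h']
              · simp [h']
        -- the positive values of ψ inject into S.erase a
        have hψ_card : ((Finset.univ.image ψ).filter (fun v => 0 < v)).card ≤ n := by
          have hinj : ∀ w ∈ (Finset.univ.image ψ).filter (fun v => 0 < v),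
              a + (1 - a) * w ∈ S.erase a := by
            intro w hw
            rcases Finset.mem_filter.mp hw with ⟨hw1, hwpos⟩
            rcases Finset.mem_image.mp hw1 with ⟨ρ, _, hρ⟩
            have hμρ : 0 < μ ρ := by
              by_contra h
              rw [← hρ] at hwpos
              simp [hψ, h] at hwpos
            have hval : w = (μ ρ - a) / (1 - a) := by
              rw [← hρ]; simp [hψ, hμρ]
            have heq : a + (1 - a) * w = μ ρ := by
              rw [hval]
              field_simp
              ring
            rw [heq]
            refine Finset.mem_erase.mpr ⟨?_, ?_⟩
            · intro h
              rw [hval] at hwpos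
              have : 0 < μ ρ - a := by
                have := (div_pos_iff.mp hwpos)
                rcases this with ⟨h1, _⟩ | ⟨_, h2⟩
                · linarith
                · linarith
              linarith [h ▸ this]
            · simp [hS, hμρ]
          have hmapinj : Set.InjOn (fun w => a + (1 - a) * w)
              ((Finset.univ.image ψ).filter (fun v => 0 < v)) := by
            intro x _ y _ hxy
            simp only at hxy
            have : (1 - a) * x = (1 - a) * y := by linarith
            exact mul_left_cancel₀ (ne_of_gt h1a) this
          have := Finset.card_le_card_of_injOn _ hinj hmapinj
          have hcard' : (S.erase a).card = S.card - 1 := Finset.card_erase_of_mem haS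
          have hSpos : 1 ≤ S.card := Finset.card_pos.mpr hSne
          omega
        have hψ_mem := ih ψ hψ_poly hψ_card
        -- express lam as convex combination
        have hcomb : (fun ρ => τ ρ * μ ρ) =
            a • (fun ρ => τ ρ * χ ρ) + (1 - a) • (fun ρ => τ ρ * ψ ρ) := by
          funext ρ
          simp only [Pi.add_apply, Pi.smul_apply, smul_eq_mul]
          by_cases h : 0 < μ ρ
          · simp only [hχ, hψ, if_pos h]
            field_simp
            ring
          · have : μ ρ = 0 := le_antisymm (not_lt.mp h) (hμ ρ).1
            simp [hχ, hψ, h, this]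
        rw [hcomb]
        exact (convex_convexHull ℝ _) (subset_convexHull ℝ _ hχ_closed) hψ_mem
          ha_pos.le h1a.le (by ring)

/-- the convex hull of the set of closed functions on a finite
weighted poset `(R, τ, ⋖)` is exactly the (weighted order) polytope
`{λ : 0 ≤ λ ≤ τ, and λ(ρ)/τ(ρ) ≤ λ(ρ')/τ(ρ') whenever ρ' ⋖ ρ}`. -/
theorem convexHull_closed_eq_order_polytope {R : Type} [Fintype R]
    (lt : R → R → Prop) (htrans : Transitive lt) (hirr : Irreflexive lt)
    (τ : R → ℝ) (hτ : ∀ ρ, 0 < τ ρ) :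
    convexHull ℝ {lam : R → ℝ | ClosedFn lt τ lam}
      = {lam : R → ℝ | ∀ ρ, (0 ≤ lam ρ ∧ lam ρ ≤ τ ρ) ∧
          ∀ ρ', lt ρ' ρ → lam ρ / τ ρ ≤ lam ρ' / τ ρ'} := by
  apply le_antisymm
  · -- convex hull ⊆ polytope
    apply convexHull_min
    · intro lam hlam ρ
      obtain ⟨hb, hc⟩ := hlam
      refine ⟨hb ρ, ?_⟩
      intro ρ' hlt
      rcases lt_or_eq_of_le (hb ρ).1 with hpos | heq
      · have h' := hc ρ ρ' hpos hlt
        rw [h', div_self (ne_of_gt (hτ ρ'))]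
        exact div_le_one_of_le₀ (hb ρ).2 (hτ ρ).le
      · rw [← heq]
        simp only [zero_div]
        exact div_nonneg (hb ρ').1 (hτ ρ').le
    · -- polytope convex
      intro x hx y hy s t hs ht hst
      intro ρ
      refine ⟨⟨?_, ?_⟩, ?_⟩
      · exact add_nonneg (mul_nonneg hs (hx ρ).1.1) (mul_nonneg ht (hy ρ).1.1)
      · calc s * x ρ + t * y ρ ≤ s * τ ρ + t * τ ρ :=
              add_le_add (mul_le_mul_of_nonneg_left (hx ρ).1.2 hs)
                (mul_le_mul_of_nonneg_left (hy ρ).1.2 ht)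
          _ = τ ρ := by rw [← add_mul, hst, one_mul]
      · intro ρ' hlt
        have h1 := (hx ρ).2 ρ' hlt
        have h2 := (hy ρ).2 ρ' hlt
        simp only [Pi.add_apply, Pi.smul_apply, smul_eq_mul]
        rw [add_div, add_div, mul_div_assoc, mul_div_assoc, mul_div_assoc, mul_div_assoc]
        exact add_le_add (mul_le_mul_of_nonneg_left h1 hs) (mul_le_mul_of_nonneg_left h2 ht)
  · -- polytope ⊆ convex hull
    intro lam hlam
    have hrep : lam = fun ρ => τ ρ * (lam ρ / τ ρ) := by
      funext ρ
      rw [mul_div_cancel₀ _ (ne_of_gt (hτ ρ))]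
    rw [hrep]
    apply aux_hull lt τ hτ ((Finset.univ.image (fun ρ => lam ρ / τ ρ)).filter (fun v => 0 < v)).card
    · intro ρ
      refine ⟨?_, ?_, ?_⟩
      · exact div_nonneg (hlam ρ).1.1 (hτ ρ).le
      · exact div_le_one_of_le₀ (hlam ρ).1.2 (hτ ρ).le
      · intro ρ' hlt
        exact (hlam ρ).2 ρ' hlt
    · exact le_refl _
end

section
/- For a fully closed function λ on a finite weighted poset (R, τ, ⋖), λ is the unique maximizer among closed functions of the linear functional μ ↦ Σ_ρ a(ρ) μ(ρ), where a(ρ) = 1 if λ(ρ) = τ(ρ) and a(ρ) = -1 if λ(ρ) = 0. -/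
open scoped Classical

/-- a fully closed function `lam` is the unique maximizer among
closed functions of `μ ↦ ∑ ρ, a(ρ) μ(ρ)`, where `a(ρ) = 1` if
`lam ρ = τ ρ` and `a(ρ) = -1` if `lam ρ = 0`. -/
theorem fully_closed_unique_maximizer {R : Type} [Fintype R]
    (lt : R → R → Prop) (htrans : Transitive lt) (hirr : Irreflexive lt)
    (τ : R → ℝ) (hτ : ∀ ρ, 0 < τ ρ)
    (lam : R → ℝ) (hl : ClosedFn lt τ lam)
    (hfull : ∀ ρ, lam ρ = 0 ∨ lam ρ = τ ρ)
    (mu : R → ℝ) (hm : ClosedFn lt τ mu) (hne : mu ≠ lam) :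
    ∑ ρ : R, (if lam ρ = 0 then (-1 : ℝ) else 1) * mu ρ
      < ∑ ρ : R, (if lam ρ = 0 then (-1 : ℝ) else 1) * lam ρ := by
  obtain ⟨ρ₀, hρ₀⟩ : ∃ ρ, mu ρ ≠ lam ρ := by
    by_contra h
    push_neg at h
    exact hne (funext h)
  refine Finset.sum_lt_sum (fun ρ _ => ?_) ⟨ρ₀, Finset.mem_univ ρ₀, ?_⟩
  · rcases hfull ρ with h0 | hτρ
    · simp only [h0, eq_self_iff_true, if_true]
      nlinarith [(hm.1 ρ).1]
    · have hτ0 : lam ρ ≠ 0 := by rw [hτρ]; exact (hτ ρ).ne'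
      simp only [if_neg hτ0, one_mul]
      have := (hm.1 ρ).2
      linarith
  · rcases hfull ρ₀ with h0 | hτρ
    · simp only [h0, eq_self_iff_true, if_true]
      have h1 := (hm.1 ρ₀).1
      have : 0 < mu ρ₀ := lt_of_le_of_ne h1 (by rw [h0] at hρ₀; exact fun h => hρ₀ h.symm)
      nlinarith
    · have hτ0 : lam ρ₀ ≠ 0 := by rw [hτρ]; exact (hτ ρ₀).ne'
      simp only [if_neg hτ0, one_mul]
      have := (hm.1 ρ₀).2
      rw [hτρ] at hρ₀ ⊢
      exact lt_of_le_of_ne this hρ₀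
end

section
/- Picard's reduction: Let H = (V_H, E_H) be a finite directed graph with vertex weights ζ : V_H → ℝ. Form the network Ĥ by adding a source s with edges (s,v) of capacity ζ(v) for all v with ζ(v) > 0, a sink t with edges (u,t) of capacity |ζ(u)| for all u with ζ(u) < 0, and giving every original edge capacity +∞. Then for any s–t cut δ(A) of finite capacity, the set X = V_H \ A is closed in H (no edge from V_H \ X to X... i.e., no edge of H leaves A ∩ V_H), and its capacity equals ζ(X) − ζ(V⁻), where V⁻ = {u : ζ(u) < 0}. Consequently, δ(A) is a minimum-capacity s–t cut iff X = V_H \ A is a closed set minimizing ζ(X). -/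
open Finset
open scoped Classical

/-- `X` is closed in the digraph with edge set `EH`: no edge enters `X`
from outside. -/
def PicClosed {V : Type} (EH : Finset (V × V)) (X : Finset V) : Prop :=
  ∀ e ∈ EH, e.2 ∈ X → e.1 ∈ X

/-- Finite part of the capacity of the cut `δ(A ∪ {s})` in Picard's network:
source edges `(s, v)` with `v ∉ A`, `ζ v > 0` contribute `ζ v`; sink edges
`(u, t)` with `u ∈ A`, `ζ u < 0` contribute `|ζ u|`. -/
noncomputable def picCutCap {V : Type} [Fintype V] (ζ : V → ℝ) (A : Finset V) : ℝ :=
  (∑ v ∈ (Finset.univ \ A).filter (fun v => 0 < ζ v), ζ v)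
  + ∑ u ∈ A.filter (fun u => ζ u < 0), |ζ u|

lemma picCutCap_eq {V : Type} [Fintype V] (ζ : V → ℝ) (A B : Finset V)
    (hB : B = Finset.univ \ A) :
    picCutCap ζ A
      = (∑ v ∈ B, ζ v)
        - ∑ u ∈ Finset.univ.filter (fun u => ζ u < 0), ζ u := by
  subst hB
  unfold picCutCap
  rw [Finset.sum_filter, Finset.sum_filter, Finset.sum_filter]
  have hsplit : ((∑ x ∈ Finset.univ \ A, if ζ x < 0 then ζ x else 0)
      + ∑ x ∈ A, if ζ x < 0 then ζ x else 0)
      = ∑ x : V, if ζ x < 0 then ζ x else 0 :=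
    Finset.sum_sdiff (Finset.subset_univ A)
  have h1 : ∀ v : V, (if 0 < ζ v then ζ v else 0)
      = ζ v - (if ζ v < 0 then ζ v else 0) := by
    intro v
    rcases lt_trichotomy (ζ v) 0 with h | h | h
    · simp [h, not_lt.2 h.le]
    · simp [h]
    · simp [h, not_lt.2 h.le]
  have h2 : ∀ u : V, (if ζ u < 0 then |ζ u| else 0)
      = -(if ζ u < 0 then ζ u else 0) := by
    intro u
    split
    · rw [abs_of_neg ‹_›]
    · simp
  simp only [h1, h2, Finset.sum_sub_distrib, Finset.sum_neg_distrib]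
  linarith

/-- Picard's reduction: for a cut given by `A` (together with
the source), the cut has finite capacity (no original edge of `H` leaves `A`,
equivalently `X = V_H \ A` is closed); in that case its capacity equals
`ζ(X) - ζ(V⁻)`, and it is a minimum-capacity (finite) cut iff `X` is a closed
set minimizing `ζ`. -/
theorem picard_reduction {V : Type} [Fintype V] [DecidableEq V]
    (EH : Finset (V × V)) (ζ : V → ℝ) (A : Finset V)
    (hfin : ∀ e ∈ EH, e.1 ∈ A → e.2 ∈ A) :
    PicClosed EH (Finset.univ \ A) ∧
    picCutCap ζ A
      = (∑ v ∈ Finset.univ \ A, ζ v)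
        - ∑ u ∈ Finset.univ.filter (fun u => ζ u < 0), ζ u ∧
    ((∀ A' : Finset V, (∀ e ∈ EH, e.1 ∈ A' → e.2 ∈ A') →
        picCutCap ζ A ≤ picCutCap ζ A') ↔
      (∀ X' : Finset V, PicClosed EH X' →
        (∑ v ∈ Finset.univ \ A, ζ v) ≤ ∑ v ∈ X', ζ v)) := by
  have closed_of : ∀ B : Finset V, (∀ e ∈ EH, e.1 ∈ B → e.2 ∈ B) →
      PicClosed EH (Finset.univ \ B) := by
    intro B hB e he h2
    simp only [Finset.mem_sdiff, Finset.mem_univ, true_and] at h2 ⊢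
    intro h1
    exact h2 (hB e he h1)
  refine ⟨closed_of A hfin, picCutCap_eq ζ A _ (by ext v; simp), ?_, ?_⟩
  · intro hmin X' hX'
    have hA' : ∀ e ∈ EH, e.1 ∈ Finset.univ \ X' → e.2 ∈ Finset.univ \ X' := by
      intro e he h1
      simp only [Finset.mem_sdiff, Finset.mem_univ, true_and] at h1 ⊢
      exact fun h2 => h1 (hX' e he h2)
    have h := hmin (Finset.univ \ X') hA'
    rw [picCutCap_eq ζ A (Finset.univ \ A) (by ext v; simp),
      picCutCap_eq ζ (Finset.univ \ X') X' (by ext v; simp)] at h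
    linarith
  · intro hmin A' hA'
    have h := hmin (Finset.univ \ A') (closed_of A' hA')
    rw [picCutCap_eq ζ A (Finset.univ \ A) (by ext v; simp),
      picCutCap_eq ζ A' (Finset.univ \ A') (by ext v; simp)]
    linarith
end

section
/- In the extended graph construction for quota-filling recognition: if x is a quota-filling stable assignment for G (so that Q_F = Q_W), then its extension y to G' defined by y = x on E, y = 0 on the new edges A ∪ B, and y(f₀w₀) = Q_F, is a stable assignment for G'. Conversely, if y is a stable assignment for G' taking zero values on A ∪ B, then x = y|_E is a quota-filling stable assignment for G. -/
open Finset
open scoped Classical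

/-- Total assignment at a vertex `v`. -/
noncomputable def sumAt {V E : Type} [Fintype E] (ends : E → V) (x : E → ℝ) (v : V) : ℝ :=
  ∑ e ∈ Finset.univ.filter (fun e => ends e = v), x e

/-- `e` is interesting for its endpoint `ends e` under `x` (for the mixed
choice function with tie-rank `rank`, smaller rank = better): equivalently,
`e` lies in the tail of `x` at that vertex. -/
def Interesting {V E : Type} [Fintype E] (ends : E → V) (rank : E → ℕ)
    (q : V → ℝ) (x : E → ℝ) (e : E) : Prop :=
  sumAt ends x (ends e) < q (ends e) ∨
  (∑ e' ∈ Finset.univ.filter (fun e' => ends e' = ends e ∧ rank e' ≤ rank e), x e')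
      < q (ends e) ∨
  ((∑ e' ∈ Finset.univ.filter (fun e' => ends e' = ends e ∧ rank e' < rank e), x e')
      < q (ends e) ∧
    ∃ e', ends e' = ends e ∧ rank e' = rank e ∧ x e < x e')

/-- `x` respects capacities and quotas. -/
def Admissible {F W E : Type} [Fintype E] (fE : E → F) (wE : E → W)
    (b : E → ℝ) (qF : F → ℝ) (qW : W → ℝ) (x : E → ℝ) : Prop :=
  (∀ e, 0 ≤ x e ∧ x e ≤ b e) ∧
  (∀ f, sumAt fE x f ≤ qF f) ∧ (∀ w, sumAt wE x w ≤ qW w)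

/-- `x` is stable: admissible and with no blocking edge (an unsaturated edge
interesting for both its endpoints). -/
def Stable {F W E : Type} [Fintype E] (fE : E → F) (wE : E → W)
    (b : E → ℝ) (qF : F → ℝ) (qW : W → ℝ) (rkF rkW : E → ℕ) (x : E → ℝ) : Prop :=
  Admissible fE wE b qF qW x ∧
  ∀ e, x e < b e → ¬ (Interesting fE rkF qF x e ∧ Interesting wE rkW qW x e)

/-- `x` fills all quotas with equality. -/
def QuotaFilling {F W E : Type} [Fintype E] (fE : E → F) (wE : E → W)
    (qF : F → ℝ) (qW : W → ℝ) (x : E → ℝ) : Prop :=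
  (∀ f, sumAt fE x f = qF f) ∧ (∀ w, sumAt wE x w = qW w)

section Extended

variable {F W E : Type} [Fintype F] [Fintype W] [Fintype E]

/-- Edges of the extended graph `G'`: original edges, the edges `f₀w` (`A`),
the edges `fw₀` (`B`), and the edge `f₀w₀`. -/
abbrev ExtE (F W E : Type) := E ⊕ W ⊕ F ⊕ Unit

/-- `F`-endpoints in `G'` (`none` is `f₀`). -/
def extFE (fE : E → F) : ExtE F W E → Option F
  | Sum.inl e => some (fE e)
  | Sum.inr (Sum.inl _) => none
  | Sum.inr (Sum.inr (Sum.inl f)) => some f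
  | Sum.inr (Sum.inr (Sum.inr _)) => none

/-- `W`-endpoints in `G'` (`none` is `w₀`). -/
def extWE (wE : E → W) : ExtE F W E → Option W
  | Sum.inl e => some (wE e)
  | Sum.inr (Sum.inl w) => some w
  | Sum.inr (Sum.inr (Sum.inl _)) => none
  | Sum.inr (Sum.inr (Sum.inr _)) => none

/-- Extended capacities: `b(f₀w) = q(w)`, `b(fw₀) = q(f)`, `b(f₀w₀) = M`
(a value exceeding both total quotas, playing the role of `∞`). -/
def extB (b : E → ℝ) (qF : F → ℝ) (qW : W → ℝ) (M : ℝ) : ExtE F W E → ℝ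
  | Sum.inl e => b e
  | Sum.inr (Sum.inl w) => qW w
  | Sum.inr (Sum.inr (Sum.inl f)) => qF f
  | Sum.inr (Sum.inr (Sum.inr _)) => M

/-- Extended quotas on the `F`-side: `q(f₀) = Q_W`. -/
noncomputable def extQF (qF : F → ℝ) (qW : W → ℝ) : Option F → ℝ
  | none => ∑ w, qW w
  | some f => qF f

/-- Extended quotas on the `W`-side: `q(w₀) = Q_F`. -/
noncomputable def extQW (qF : F → ℝ) (qW : W → ℝ) : Option W → ℝ
  | none => ∑ f, qF f
  | some w => qW w

/-- Extended tie-ranks at `F`-endpoints: `fw₀` is best at each `f` (rank `0`,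
original ranks shifted by one); at `f₀` the `A`-edges get arbitrary ranks
`rA w < KA` and `f₀w₀` gets rank `KA` (worst). -/
def extRkF (rkF : E → ℕ) (rA : W → ℕ) (KA : ℕ) : ExtE F W E → ℕ
  | Sum.inl e => rkF e + 1
  | Sum.inr (Sum.inl w) => rA w
  | Sum.inr (Sum.inr (Sum.inl _)) => 0
  | Sum.inr (Sum.inr (Sum.inr _)) => KA

/-- Extended tie-ranks at `W`-endpoints: `f₀w` is worst at each `w` (rank
`NA`, larger than all original ranks); at `w₀` the edge `f₀w₀` is best (rank
`0`) and the `B`-edges get arbitrary ranks `rB f + 1`. -/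
def extRkW (rkW : E → ℕ) (rB : F → ℕ) (NA : ℕ) : ExtE F W E → ℕ
  | Sum.inl e => rkW e
  | Sum.inr (Sum.inl _) => NA
  | Sum.inr (Sum.inr (Sum.inl f)) => rB f + 1
  | Sum.inr (Sum.inr (Sum.inr _)) => 0

/-- The extension of `x` to `G'`: zero on `A ∪ B`, `Q_F` on `f₀w₀`. -/
noncomputable def extAsg (qF : F → ℝ) (x : E → ℝ) : ExtE F W E → ℝ
  | Sum.inl e => x e
  | Sum.inr (Sum.inl _) => 0
  | Sum.inr (Sum.inr (Sum.inl _)) => 0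
  | Sum.inr (Sum.inr (Sum.inr _)) => ∑ f, qF f


/-! ### Auxiliary lemmas -/

lemma sum_ext (p : (E ⊕ W ⊕ F ⊕ Unit) → Prop) [DecidablePred p] (y : (E ⊕ W ⊕ F ⊕ Unit) → ℝ) :
    ∑ e ∈ Finset.univ.filter p, y e =
      (∑ e ∈ Finset.univ.filter (fun e : E => p (Sum.inl e)), y (Sum.inl e))
    + (∑ w ∈ Finset.univ.filter (fun w : W => p (Sum.inr (Sum.inl w))), y (Sum.inr (Sum.inl w)))
    + (∑ f ∈ Finset.univ.filter (fun f : F => p (Sum.inr (Sum.inr (Sum.inl f)))), y (Sum.inr (Sum.inr (Sum.inl f))))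
    + (if p (Sum.inr (Sum.inr (Sum.inr ()))) then y (Sum.inr (Sum.inr (Sum.inr ()))) else 0) := by
  simp only [Finset.sum_filter, Fintype.sum_sum_type]
  simp only [Finset.univ_unique, Finset.sum_singleton]
  ring

lemma sum_fiber_F (fE : E → F) (x : E → ℝ) : ∑ f, sumAt fE x f = ∑ e, x e := by
  unfold sumAt
  exact Finset.sum_fiberwise_of_maps_to (g := fE) (fun e _ => Finset.mem_univ (fE e)) x

lemma sumAt_nonneg {V : Type} (ends : E → V) {x : E → ℝ} (hx : ∀ e, 0 ≤ x e) (v : V) :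
    0 ≤ sumAt ends x v :=
  Finset.sum_nonneg (fun e _ => hx e)

section Sums
variable (fE : E → F) (wE : E → W) (qF : F → ℝ) (qW : W → ℝ)
  (rkF rkW : E → ℕ) (rA : W → ℕ) (rB : F → ℕ) (KA NA : ℕ)
  {y : ExtE F W E → ℝ}
  (hA : ∀ w, y (Sum.inr (Sum.inl w)) = 0)
  (hB : ∀ f, y (Sum.inr (Sum.inr (Sum.inl f))) = 0)

include hA hB in
lemma S1 (f : F) : sumAt (extFE fE) y (some f) = sumAt fE (fun e => y (Sum.inl e)) f := by
  unfold sumAt; rw [sum_ext]; simp [extFE, hA, hB]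

include hA hB in
lemma S2 : sumAt (extFE fE) y none = y (Sum.inr (Sum.inr (Sum.inr ()))) := by
  unfold sumAt; rw [sum_ext]; simp [extFE, hA, hB]

include hA hB in
lemma S3 (w : W) : sumAt (extWE wE) y (some w) = sumAt wE (fun e => y (Sum.inl e)) w := by
  unfold sumAt; rw [sum_ext]; simp [extWE, hA, hB]

include hA hB in
lemma S4 : sumAt (extWE wE) y none = y (Sum.inr (Sum.inr (Sum.inr ()))) := by
  unfold sumAt; rw [sum_ext]; simp [extWE, hA, hB]

include hA hB in
lemma R1 (e : E) :
    ∑ e' ∈ Finset.univ.filter (fun e' => extFE fE e' = some (fE e) ∧ extRkF rkF rA KA e' ≤ rkF e + 1), y e'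
    = ∑ e' ∈ Finset.univ.filter (fun e' => fE e' = fE e ∧ rkF e' ≤ rkF e), y (Sum.inl e') := by
  rw [sum_ext]; simp [extFE, extRkF, hA, hB]

include hA hB in
lemma R2 (e : E) :
    ∑ e' ∈ Finset.univ.filter (fun e' => extFE fE e' = some (fE e) ∧ extRkF rkF rA KA e' < rkF e + 1), y e'
    = ∑ e' ∈ Finset.univ.filter (fun e' => fE e' = fE e ∧ rkF e' < rkF e), y (Sum.inl e') := by
  rw [sum_ext]; simp [extFE, extRkF, hA, hB, Nat.lt_succ_iff, Nat.succ_lt_succ_iff]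

lemma R3 (hNA : ∀ e, rkW e < NA) (e : E) :
    ∑ e' ∈ Finset.univ.filter (fun e' => extWE wE e' = some (wE e) ∧ extRkW rkW rB NA e' ≤ rkW e), y e'
    = ∑ e' ∈ Finset.univ.filter (fun e' => wE e' = wE e ∧ rkW e' ≤ rkW e), y (Sum.inl e') := by
  rw [sum_ext]; simp [extWE, extRkW, (hNA e).not_ge]

lemma R4 (hNA : ∀ e, rkW e < NA) (e : E) :
    ∑ e' ∈ Finset.univ.filter (fun e' => extWE wE e' = some (wE e) ∧ extRkW rkW rB NA e' < rkW e), y e'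
    = ∑ e' ∈ Finset.univ.filter (fun e' => wE e' = wE e ∧ rkW e' < rkW e), y (Sum.inl e') := by
  rw [sum_ext]; simp [extWE, extRkW, ((hNA e).trans_le (Nat.le_refl NA)).asymm]


include hA hB in
lemma intF_iff (e : E) :
    Interesting (extFE fE) (extRkF rkF rA KA) (extQF qF qW) y (Sum.inl e) ↔
      Interesting fE rkF qF (fun e => y (Sum.inl e)) e := by
  have hex : (∃ e', extFE fE e' = some (fE e) ∧ extRkF rkF rA KA e' = rkF e + 1 ∧
        y (Sum.inl e) < y e') ↔
      (∃ e', fE e' = fE e ∧ rkF e' = rkF e ∧ y (Sum.inl e) < y (Sum.inl e')) := by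
    constructor
    · rintro ⟨(e' | w | f | u), h1, h2, h3⟩
      · exact ⟨e', by simpa [extFE] using h1, by simpa [extRkF] using h2, h3⟩
      · simp [extFE] at h1
      · simp [extRkF] at h2
      · simp [extFE] at h1
    · rintro ⟨e', h1, h2, h3⟩
      exact ⟨Sum.inl e', by simpa [extFE] using h1, by simpa [extRkF] using h2, h3⟩
  simp only [Interesting, show extFE fE (Sum.inl e) = some (fE e) from rfl,
    show extRkF rkF rA KA (Sum.inl e) = rkF e + 1 from rfl,
    show extQF qF qW (some (fE e)) = qF (fE e) from rfl,
    S1 fE hA hB, R1 fE rkF rA KA hA hB, R2 fE rkF rA KA hA hB, hex]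

include hA hB in
lemma intW_iff (hNA : ∀ e, rkW e < NA) (e : E) :
    Interesting (extWE wE) (extRkW rkW rB NA) (extQW qF qW) y (Sum.inl e) ↔
      Interesting wE rkW qW (fun e => y (Sum.inl e)) e := by
  have hex : (∃ e', extWE wE e' = some (wE e) ∧ extRkW rkW rB NA e' = rkW e ∧
        y (Sum.inl e) < y e') ↔
      (∃ e', wE e' = wE e ∧ rkW e' = rkW e ∧ y (Sum.inl e) < y (Sum.inl e')) := by
    constructor
    · rintro ⟨(e' | w | f | u), h1, h2, h3⟩
      · exact ⟨e', by simpa [extWE] using h1, by simpa [extRkW] using h2, h3⟩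
      · simp only [extRkW] at h2; exact absurd h2.symm (hNA e).ne
      · simp [extWE] at h1
      · simp [extWE] at h1
    · rintro ⟨e', h1, h2, h3⟩
      exact ⟨Sum.inl e', by simpa [extWE] using h1, by simpa [extRkW] using h2, h3⟩
  simp only [Interesting, show extWE wE (Sum.inl e) = some (wE e) from rfl,
    show extRkW rkW rB NA (Sum.inl e) = rkW e from rfl,
    show extQW qF qW (some (wE e)) = qW (wE e) from rfl,
    S3 wE hA hB, R3 wE rkW rB NA hNA, R4 wE rkW rB NA hNA, hex]


include hA in
lemma RA_le (hNA : ∀ e, rkW e < NA) (w : W) :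
    ∑ e' ∈ Finset.univ.filter (fun e' => extWE wE e' = some w ∧ extRkW rkW rB NA e' ≤ NA), y e'
      = sumAt wE (fun e => y (Sum.inl e)) w := by
  unfold sumAt; rw [sum_ext]; simp [extWE, extRkW, hA, fun e => (hNA e).le]

lemma RA_lt (hNA : ∀ e, rkW e < NA) (w : W) :
    ∑ e' ∈ Finset.univ.filter (fun e' => extWE wE e' = some w ∧ extRkW rkW rB NA e' < NA), y e'
      = sumAt wE (fun e => y (Sum.inl e)) w := by
  unfold sumAt; rw [sum_ext]; simp [extWE, extRkW, hNA]

include hA in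
lemma RA0 {w : W} (hK : rA w < KA) :
    ∑ e' ∈ Finset.univ.filter (fun e' => extFE fE e' = none ∧ extRkF rkF rA KA e' ≤ rA w), y e' = 0 := by
  rw [sum_ext]; simp [extFE, extRkF, hA, hK.not_ge]

include hB in
lemma RB_le (f : F) :
    ∑ e' ∈ Finset.univ.filter (fun e' => extWE wE e' = none ∧ extRkW rkW rB NA e' ≤ rB f + 1), y e'
      = y (Sum.inr (Sum.inr (Sum.inr ()))) := by
  rw [sum_ext]; simp [extWE, extRkW, hB]

include hB in
lemma RB_lt (f : F) :
    ∑ e' ∈ Finset.univ.filter (fun e' => extWE wE e' = none ∧ extRkW rkW rB NA e' < rB f + 1), y e'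
      = y (Sum.inr (Sum.inr (Sum.inr ()))) := by
  rw [sum_ext]; simp [extWE, extRkW, hB, Nat.lt_succ_iff]

include hB in
lemma RB1 (f : F) :
    ∑ e' ∈ Finset.univ.filter (fun e' => extFE fE e' = some f ∧ extRkF rkF rA KA e' ≤ 0), y e' = 0 := by
  rw [sum_ext]; simp [extFE, extRkF, hB]

include hA in
lemma RU_F (hKA : ∀ w, rA w < KA) :
    ∑ e' ∈ Finset.univ.filter (fun e' => extFE fE e' = none ∧ extRkF rkF rA KA e' ≤ KA), y e'
      = y (Sum.inr (Sum.inr (Sum.inr ()))) := by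
  rw [sum_ext]; simp [extFE, extRkF, hA, fun w => (hKA w).le]

lemma RU_W :
    ∑ e' ∈ Finset.univ.filter (fun e' => extWE wE e' = none ∧ extRkW rkW rB NA e' ≤ 0), y e'
      = y (Sum.inr (Sum.inr (Sum.inr ()))) := by
  rw [sum_ext]; simp [extWE, extRkW]


/-! Variants stated in the exact unreduced form appearing in `Interesting` goals. -/

include hA hB in
lemma S1e (e : E) :
    sumAt (extFE fE) y (extFE fE ((Sum.inl e : ExtE F W E))) = sumAt fE (fun e => y ((Sum.inl e : ExtE F W E))) (fE e) :=
  S1 fE hA hB (fE e)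

include hA hB in
lemma S3e (e : E) :
    sumAt (extWE wE) y (extWE wE ((Sum.inl e : ExtE F W E))) = sumAt wE (fun e => y ((Sum.inl e : ExtE F W E))) (wE e) :=
  S3 wE hA hB (wE e)

include hA hB in
lemma S3Ae (w : W) :
    sumAt (extWE wE) y (extWE wE ((Sum.inr (Sum.inl w) : ExtE F W E))) = sumAt wE (fun e => y ((Sum.inl e : ExtE F W E))) w :=
  S3 wE hA hB w

include hA hB in
lemma S4Be (f : F) :
    sumAt (extWE wE) y (extWE wE ((Sum.inr (Sum.inr (Sum.inl f)) : ExtE F W E)))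
      = y (Sum.inr (Sum.inr (Sum.inr ()))) :=
  S4 wE hA hB

include hA hB in
lemma S4Ue :
    sumAt (extWE wE) y (extWE wE ((Sum.inr (Sum.inr (Sum.inr ())) : ExtE F W E)))
      = y (Sum.inr (Sum.inr (Sum.inr ()))) :=
  S4 wE hA hB

include hA hB in
lemma R1e (e : E) :
    ∑ e' ∈ Finset.univ.filter (fun e' => extFE fE e' = extFE fE ((Sum.inl e : ExtE F W E)) ∧
        extRkF rkF rA KA e' ≤ extRkF rkF rA KA ((Sum.inl e : ExtE F W E))), y e'
    = ∑ e' ∈ Finset.univ.filter (fun e' => fE e' = fE e ∧ rkF e' ≤ rkF e), y (Sum.inl e') :=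
  R1 fE rkF rA KA hA hB e

include hA hB in
lemma R2e (e : E) :
    ∑ e' ∈ Finset.univ.filter (fun e' => extFE fE e' = extFE fE ((Sum.inl e : ExtE F W E)) ∧
        extRkF rkF rA KA e' < extRkF rkF rA KA ((Sum.inl e : ExtE F W E))), y e'
    = ∑ e' ∈ Finset.univ.filter (fun e' => fE e' = fE e ∧ rkF e' < rkF e), y (Sum.inl e') :=
  R2 fE rkF rA KA hA hB e

lemma R3e (hNA : ∀ e, rkW e < NA) (e : E) :
    ∑ e' ∈ Finset.univ.filter (fun e' => extWE wE e' = extWE wE ((Sum.inl e : ExtE F W E)) ∧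
        extRkW rkW rB NA e' ≤ extRkW rkW rB NA ((Sum.inl e : ExtE F W E))), y e'
    = ∑ e' ∈ Finset.univ.filter (fun e' => wE e' = wE e ∧ rkW e' ≤ rkW e), y (Sum.inl e') :=
  R3 wE rkW rB NA hNA e

lemma R4e (hNA : ∀ e, rkW e < NA) (e : E) :
    ∑ e' ∈ Finset.univ.filter (fun e' => extWE wE e' = extWE wE ((Sum.inl e : ExtE F W E)) ∧
        extRkW rkW rB NA e' < extRkW rkW rB NA ((Sum.inl e : ExtE F W E))), y e'
    = ∑ e' ∈ Finset.univ.filter (fun e' => wE e' = wE e ∧ rkW e' < rkW e), y (Sum.inl e') :=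
  R4 wE rkW rB NA hNA e

include hA in
lemma RA_lee (hNA : ∀ e, rkW e < NA) (w : W) :
    ∑ e' ∈ Finset.univ.filter (fun e' => extWE wE e' = extWE wE ((Sum.inr (Sum.inl w) : ExtE F W E)) ∧
        extRkW rkW rB NA e' ≤ extRkW rkW rB NA ((Sum.inr (Sum.inl w) : ExtE F W E))), y e'
    = sumAt wE (fun e => y ((Sum.inl e : ExtE F W E))) w :=
  RA_le wE rkW rB NA hA hNA w

lemma RA_lte (hNA : ∀ e, rkW e < NA) (w : W) :
    ∑ e' ∈ Finset.univ.filter (fun e' => extWE wE e' = extWE wE ((Sum.inr (Sum.inl w) : ExtE F W E)) ∧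
        extRkW rkW rB NA e' < extRkW rkW rB NA ((Sum.inr (Sum.inl w) : ExtE F W E))), y e'
    = sumAt wE (fun e => y ((Sum.inl e : ExtE F W E))) w :=
  RA_lt wE rkW rB NA hNA w

include hA in
lemma RA0e {w : W} (hK : rA w < KA) :
    ∑ e' ∈ Finset.univ.filter (fun e' => extFE fE e' = extFE fE ((Sum.inr (Sum.inl w) : ExtE F W E)) ∧
        extRkF rkF rA KA e' ≤ extRkF rkF rA KA ((Sum.inr (Sum.inl w) : ExtE F W E))), y e' = 0 :=
  RA0 fE rkF rA KA hA hK

include hB in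
lemma RB_lee (f : F) :
    ∑ e' ∈ Finset.univ.filter
        (fun e' => extWE wE e' = extWE wE ((Sum.inr (Sum.inr (Sum.inl f)) : ExtE F W E)) ∧
        extRkW rkW rB NA e' ≤ extRkW rkW rB NA ((Sum.inr (Sum.inr (Sum.inl f)) : ExtE F W E))), y e'
    = y (Sum.inr (Sum.inr (Sum.inr ()))) :=
  RB_le wE rkW rB NA hB f

include hB in
lemma RB_lte (f : F) :
    ∑ e' ∈ Finset.univ.filter
        (fun e' => extWE wE e' = extWE wE ((Sum.inr (Sum.inr (Sum.inl f)) : ExtE F W E)) ∧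
        extRkW rkW rB NA e' < extRkW rkW rB NA ((Sum.inr (Sum.inr (Sum.inl f)) : ExtE F W E))), y e'
    = y (Sum.inr (Sum.inr (Sum.inr ()))) :=
  RB_lt wE rkW rB NA hB f

include hB in
lemma RB1e (f : F) :
    ∑ e' ∈ Finset.univ.filter
        (fun e' => extFE fE e' = extFE fE ((Sum.inr (Sum.inr (Sum.inl f)) : ExtE F W E)) ∧
        extRkF rkF rA KA e' ≤ extRkF rkF rA KA ((Sum.inr (Sum.inr (Sum.inl f)) : ExtE F W E))), y e' = 0 :=
  RB1 fE rkF rA KA hB f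

lemma RU_We :
    ∑ e' ∈ Finset.univ.filter
        (fun e' => extWE wE e' = extWE wE ((Sum.inr (Sum.inr (Sum.inr ())) : ExtE F W E)) ∧
        extRkW rkW rB NA e' ≤ extRkW rkW rB NA ((Sum.inr (Sum.inr (Sum.inr ())) : ExtE F W E))), y e'
    = y (Sum.inr (Sum.inr (Sum.inr ()))) :=
  RU_W wE rkW rB NA

end Sums

/-- (i) if `x` is a quota-filling stable assignment for `G`,
then its extension (zero on `A ∪ B`, `Q_F` on `f₀w₀`) is stable for `G'`;
(ii) conversely, if `y` is a stable assignment for `G'` vanishing on `A ∪ B`,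
then its restriction to `E` is a quota-filling stable assignment for `G`. -/
theorem extended_graph_quota_filling
    (fE : E → F) (wE : E → W) (b : E → ℝ) (qF : F → ℝ) (qW : W → ℝ)
    (rkF rkW : E → ℕ) (rA : W → ℕ) (rB : F → ℕ) (KA NA : ℕ) (M : ℝ)
    (hKA : ∀ w, rA w < KA) (hNA : ∀ e, rkW e < NA)
    (hMF : (∑ f, qF f) < M) (hMW : (∑ w, qW w) < M) :
    (∀ x : E → ℝ, Stable fE wE b qF qW rkF rkW x →
      QuotaFilling fE wE qF qW x →
      Stable (extFE fE) (extWE wE) (extB b qF qW M) (extQF qF qW) (extQW qF qW)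
        (extRkF rkF rA KA) (extRkW rkW rB NA) (extAsg qF x)) ∧
    (∀ y : ExtE F W E → ℝ,
      Stable (extFE fE) (extWE wE) (extB b qF qW M) (extQF qF qW) (extQW qF qW)
        (extRkF rkF rA KA) (extRkW rkW rB NA) y →
      (∀ w : W, y (Sum.inr (Sum.inl w)) = 0) →
      (∀ f : F, y (Sum.inr (Sum.inr (Sum.inl f))) = 0) →
      Stable fE wE b qF qW rkF rkW (fun e => y (Sum.inl e)) ∧
      QuotaFilling fE wE qF qW (fun e => y (Sum.inl e))) := by
  constructor
  · -- Direction (i)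
    intro x hx hq
    obtain ⟨⟨hcap, hqf, hqw⟩, hblock⟩ := hx
    obtain ⟨hQF, hQW⟩ := hq
    have hyA : ∀ w : W, extAsg qF x ((Sum.inr (Sum.inl w)) : ExtE F W E) = 0 := fun _ => rfl
    have hyB : ∀ f : F,
        extAsg qF x ((Sum.inr (Sum.inr (Sum.inl f))) : ExtE F W E) = 0 := fun _ => rfl
    have hxnn : ∀ e, 0 ≤ x e := fun e => (hcap e).1
    have hqFnn : ∀ f, 0 ≤ qF f := fun f => (hQF f) ▸ sumAt_nonneg fE hxnn f
    have hqWnn : ∀ w, 0 ≤ qW w := fun w => (hQW w) ▸ sumAt_nonneg wE hxnn w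
    have hQeq : ∑ f, qF f = ∑ w, qW w := by
      have h1 : ∑ f, qF f = ∑ e, x e := by
        rw [← sum_fiber_F fE x]; exact Finset.sum_congr rfl (fun f _ => (hQF f).symm)
      have h2 : ∑ w, qW w = ∑ e, x e := by
        rw [← sum_fiber_F wE x]; exact Finset.sum_congr rfl (fun w _ => (hQW w).symm)
      rw [h1, h2]
    refine ⟨⟨?_, ?_, ?_⟩, ?_⟩
    · rintro (e | w | f | u)
      · exact hcap e
      · exact ⟨le_refl 0, hqWnn w⟩
      · exact ⟨le_refl 0, hqFnn f⟩
      · exact ⟨Finset.sum_nonneg (fun f _ => hqFnn f), le_of_lt hMF⟩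
    · rintro (_ | f)
      · rw [S2 fE hyA hyB]
        exact le_of_eq hQeq
      · rw [S1 fE hyA hyB f]
        exact hqf f
    · rintro (_ | w)
      · rw [S4 wE hyA hyB]
        exact le_refl (∑ f, qF f)
      · rw [S3 wE hyA hyB w]
        exact hqw w
    · rintro (e | w | f | u) hlt ⟨hIF, hIW⟩
      · exact hblock e hlt
          ⟨(intF_iff fE qF qW rkF rA KA hyA hyB e).mp hIF,
           (intW_iff wE qF qW rkW rB NA hyA hyB hNA e).mp hIW⟩
      · -- A-edge: not interesting at w
        rcases hIW with h | h | ⟨h, -⟩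
        · rw [S3Ae wE hyA hyB w] at h
          have h'' : sumAt wE x w < qW w := h
          exact absurd h'' (not_lt.mpr (hQW w).ge)
        · simp only [show extWE wE ((Sum.inr (Sum.inl w)) : ExtE F W E) = some w from rfl,
            show extRkW rkW rB NA ((Sum.inr (Sum.inl w)) : ExtE F W E) = NA from rfl,
            RA_le wE rkW rB NA hyA hNA w] at h
          have h'' : sumAt wE x w < qW w := h
          exact absurd h'' (not_lt.mpr (hQW w).ge)
        · simp only [show extWE wE ((Sum.inr (Sum.inl w)) : ExtE F W E) = some w from rfl,
            show extRkW rkW rB NA ((Sum.inr (Sum.inl w)) : ExtE F W E) = NA from rfl,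
            RA_lt wE rkW rB NA hNA w] at h
          have h'' : sumAt wE x w < qW w := h
          exact absurd h'' (not_lt.mpr (hQW w).ge)
      · -- B-edge: not interesting at w₀
        rcases hIW with h | h | ⟨h, -⟩
        · rw [S4Be wE hyA hyB f] at h
          have h'' : (∑ f, qF f) < ∑ f, qF f := h
          exact absurd h'' (lt_irrefl _)
        · simp only [show extWE wE ((Sum.inr (Sum.inr (Sum.inl f))) : ExtE F W E) = none from rfl,
            show extRkW rkW rB NA ((Sum.inr (Sum.inr (Sum.inl f))) : ExtE F W E) = rB f + 1 from rfl,
            RB_le wE rkW rB NA hyB f] at h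
          have h'' : (∑ f, qF f) < ∑ f, qF f := h
          exact absurd h'' (lt_irrefl _)
        · simp only [show extWE wE ((Sum.inr (Sum.inr (Sum.inl f))) : ExtE F W E) = none from rfl,
            show extRkW rkW rB NA ((Sum.inr (Sum.inr (Sum.inl f))) : ExtE F W E) = rB f + 1 from rfl,
            RB_lt wE rkW rB NA hyB f] at h
          have h'' : (∑ f, qF f) < ∑ f, qF f := h
          exact absurd h'' (lt_irrefl _)
      · -- f₀w₀: not interesting at w₀
        rcases hIW with h | h | ⟨-, h⟩
        · rw [S4Ue wE hyA hyB] at h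
          have h'' : (∑ f, qF f) < ∑ f, qF f := h
          exact absurd h'' (lt_irrefl _)
        · simp only [show extWE wE ((Sum.inr (Sum.inr (Sum.inr ()))) : ExtE F W E) = none from rfl,
            show extRkW rkW rB NA ((Sum.inr (Sum.inr (Sum.inr ()))) : ExtE F W E) = 0 from rfl,
            RU_W wE rkW rB NA] at h
          have h'' : (∑ f, qF f) < ∑ f, qF f := h
          exact absurd h'' (lt_irrefl _)
        · obtain ⟨e', h1, h2, h3⟩ := h
          rcases e' with e | w | f | ⟨⟩
          · simp [extWE] at h1
          · simp [extWE] at h1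
          · simp [extRkW] at h2
          · exact absurd h3 (lt_irrefl _)
  · -- Direction (ii)
    intro y hy hyA hyB
    obtain ⟨⟨hcap, hqf, hqw⟩, hblock⟩ := hy
    have hxnn : ∀ e, 0 ≤ y (Sum.inl e) := fun e => (hcap (Sum.inl e)).1
    have hxb : ∀ e, y (Sum.inl e) ≤ b e := fun e => (hcap (Sum.inl e)).2
    have hqFnn : ∀ f, 0 ≤ qF f := fun f => by
      have h := (hcap (Sum.inr (Sum.inr (Sum.inl f)))).2
      rw [hyB f] at h; exact h
    have hqWnn : ∀ w, 0 ≤ qW w := fun w => by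
      have h := (hcap (Sum.inr (Sum.inl w))).2
      rw [hyA w] at h; exact h
    have hfle : ∀ f, sumAt fE (fun e => y (Sum.inl e)) f ≤ qF f := fun f => by
      have h := hqf (some f)
      rw [S1 fE hyA hyB f] at h
      exact h
    have hwle : ∀ w, sumAt wE (fun e => y (Sum.inl e)) w ≤ qW w := fun w => by
      have h := hqw (some w)
      rw [S3 wE hyA hyB w] at h
      exact h
    have htF : y (Sum.inr (Sum.inr (Sum.inr ()))) ≤ ∑ w, qW w := by
      have h := hqf none
      rw [S2 fE hyA hyB] at h
      exact h
    -- every w-quota is filled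
    have hWfill : ∀ w, sumAt wE (fun e => y (Sum.inl e)) w = qW w := by
      intro w
      by_contra hne
      have hlt : sumAt wE (fun e => y (Sum.inl e)) w < qW w := lt_of_le_of_ne (hwle w) hne
      have hqWpos : 0 < qW w := lt_of_le_of_lt (sumAt_nonneg wE hxnn w) hlt
      have hQW0 : 0 < ∑ w', qW w' :=
        lt_of_lt_of_le hqWpos (Finset.single_le_sum (fun i _ => hqWnn i) (Finset.mem_univ w))
      refine hblock (Sum.inr (Sum.inl w)) ?_ ⟨?_, ?_⟩
      · show y (Sum.inr (Sum.inl w)) < qW w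
        rw [hyA w]; exact hqWpos
      · refine Or.inr (Or.inl ?_)
        simp only [show extFE fE ((Sum.inr (Sum.inl w)) : ExtE F W E) = none from rfl,
            show extRkF rkF rA KA ((Sum.inr (Sum.inl w)) : ExtE F W E) = rA w from rfl,
            RA0 fE rkF rA KA hyA (hKA w)]
        exact hQW0
      · refine Or.inl ?_
        rw [S3Ae wE hyA hyB w]
        exact hlt
    have hsum : ∑ w, qW w = ∑ f, sumAt fE (fun e => y (Sum.inl e)) f := by
      rw [sum_fiber_F fE (fun e => y (Sum.inl e)), ← sum_fiber_F wE (fun e => y (Sum.inl e))]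
      exact Finset.sum_congr rfl (fun w _ => (hWfill w).symm)
    -- every f-quota is filled
    have hFfill : ∀ f, sumAt fE (fun e => y (Sum.inl e)) f = qF f := by
      by_contra hne
      push_neg at hne
      obtain ⟨f0, hf0⟩ := hne
      have hlt : sumAt fE (fun e => y (Sum.inl e)) f0 < qF f0 := lt_of_le_of_ne (hfle f0) hf0
      have hQlt : ∑ f, sumAt fE (fun e => y (Sum.inl e)) f < ∑ f, qF f :=
        Finset.sum_lt_sum (fun f _ => hfle f) ⟨f0, Finset.mem_univ f0, hlt⟩
      have hQWlt : ∑ w, qW w < ∑ f, qF f := by rw [hsum]; exact hQlt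
      have htlt : y (Sum.inr (Sum.inr (Sum.inr ()))) < ∑ f, qF f := lt_of_le_of_lt htF hQWlt
      have hqf0pos : 0 < qF f0 := lt_of_le_of_lt (sumAt_nonneg fE hxnn f0) hlt
      refine hblock (Sum.inr (Sum.inr (Sum.inl f0))) ?_ ⟨?_, ?_⟩
      · show y (Sum.inr (Sum.inr (Sum.inl f0))) < qF f0
        rw [hyB f0]; exact hqf0pos
      · refine Or.inr (Or.inl ?_)
        simp only [show extFE fE ((Sum.inr (Sum.inr (Sum.inl f0))) : ExtE F W E) = some f0 from rfl,
            show extRkF rkF rA KA ((Sum.inr (Sum.inr (Sum.inl f0))) : ExtE F W E) = 0 from rfl,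
            RB1 fE rkF rA KA hyB f0]
        exact hqf0pos
      · refine Or.inl ?_
        rw [S4Be wE hyA hyB f0]
        exact htlt
    refine ⟨⟨⟨fun e => ⟨hxnn e, hxb e⟩, hfle, hwle⟩, ?_⟩, hFfill, hWfill⟩
    intro e hlt ⟨hIf, hIw⟩
    exact hblock (Sum.inl e) hlt
      ⟨(intF_iff fE qF qW rkF rA KA hyA hyB e).mpr hIf,
       (intW_iff wE qF qW rkW rB NA hyA hyB hNA e).mpr hIw⟩

end Extended
end
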